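/- arXiv:2509.00011 — 6 statements merged into one kernel-verified Lean document; each statement's English description precedes it below -/
import Mathlib

section
/- Let N(t) = 1_{T≤t} with hazard rate μ under measure P, let v(t) = exp(-∫₀ᵗ δ) and let V solve Thiele's equation V'(t) = δ(t)V(t) + P(t) - μ(t)(S(t)-V(t)) with V(n) = S̄. Then for each t ∈ [0,n], 1_{T>t}·V(t) = E[ ∫_{(t,n]} (v(r)/v(t)) d(-B)(r) | F_t ], where dB(r) = 1_{T>r}P(r)dr - S(r)dN(r) for r<n and the cashflow at n additionally includes -1_{T>n}S̄. -/
/-!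
Every generator `{T ≤ s}`, `s ≤ t`, of `ℱ t` misses `{t < T}`, so `{t < T}` is an atom of
`ℱ t`. The discounted net outgo vanishes off this atom, hence its conditional expectation is
`1_{t < T} · E[Y t] / P(t < T)`. Writing `F x = exp (-∫₀ˣ μ) = P(x < T)`, the law of `T` has
density `μ F`, and Fubini turns the premium stream into `∫ₜⁿ (v/v t) Prem F`, so
`E[Y t] = (∫ₜⁿ v F (μ S - Prem) + v n F n S̄) / v t`. Thiele's equation gives
`(v F V)' = v F (Prem - μ S)`, which integrates to `E[Y t] = F t · V t`.
-/

open MeasureTheory Set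

section Atom

variable {Ω : Type*}

@[reducible]
def MeasurableSpace.withAtom (B : Set Ω) : MeasurableSpace Ω where
  MeasurableSet' A := Disjoint A B ∨ B ⊆ A
  measurableSet_empty := Or.inl (empty_disjoint B)
  measurableSet_compl A := by
    rintro (h | h)
    · exact Or.inr h.subset_compl_left
    · exact Or.inl (disjoint_compl_left.mono_right h)
  measurableSet_iUnion A hA := by
    by_cases h : ∃ i, B ⊆ A i
    · obtain ⟨i, hi⟩ := h
      exact Or.inr (hi.trans (subset_iUnion A i))
    · push Not at h
      exact Or.inl (disjoint_iUnion_left.2 fun i => (hA i).resolve_right (h i))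

theorem MeasurableSpace.comap_le_withAtom {β : Type*} [MeasurableSpace β] {B : Set Ω}
    {f : Ω → β} (hf : ∀ ω ∈ B, ∀ ω' ∈ B, f ω = f ω') :
    MeasurableSpace.comap f ‹_› ≤ withAtom B := by
  rintro _ ⟨U, -, rfl⟩
  by_cases h : B ⊆ f ⁻¹' U
  · exact Or.inr h
  · obtain ⟨ω, hωB, hωU⟩ := not_subset.1 h
    exact Or.inl (disjoint_right.2 fun ω' hω'B hω'U =>
      hωU (by rwa [mem_preimage, hf ω hωB ω' hω'B]))

theorem MeasureTheory.indicator_ae_eq_condExp_of_le_withAtom {m m0 : MeasurableSpace Ω}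
    {P : Measure Ω} [IsFiniteMeasure P] (hm : m ≤ m0) {B : Set Ω} (hBm : MeasurableSet[m] B)
    (hmB : m ≤ MeasurableSpace.withAtom B) {Y : Ω → ℝ} (hY : Integrable Y P)
    (hYB : ∀ ω ∉ B, Y ω = 0) {c : ℝ} (hc : ∫ ω, Y ω ∂P = P.real B * c) :
    B.indicator (fun _ => c) =ᵐ[P] P[Y|m] := by
  have hB : MeasurableSet B := hm B hBm
  refine ae_eq_condExp_of_forall_setIntegral_eq hm hY
    (fun A _ _ => ((integrable_const c).indicator hB).integrableOn) (fun A hA _ => ?_)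
    (stronglyMeasurable_const.indicator hBm).aestronglyMeasurable
  rcases hmB A hA with hAB | hBA
  · rw [setIntegral_eq_zero_of_forall_eq_zero fun ω hω =>
        indicator_of_notMem (disjoint_left.1 hAB hω) _,
      setIntegral_eq_zero_of_forall_eq_zero fun ω hω => hYB ω (disjoint_left.1 hAB hω)]
  · rw [setIntegral_eq_integral_of_forall_compl_eq_zero fun ω hω =>
        indicator_of_notMem (fun h => hω (hBA h)) _,
      setIntegral_eq_integral_of_forall_compl_eq_zero fun ω hω => hYB ω (fun h => hω (hBA h)),
      integral_indicator_const c hB, hc, smul_eq_mul]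

variable (T : Ω → ℝ) (t : ℝ)

@[reducible]
noncomputable def deathHistory : MeasurableSpace Ω :=
  ⨆ s ∈ Iic t, MeasurableSpace.comap (fun ω => if T ω ≤ s then (1:ℝ) else 0) inferInstance

theorem measurableSet_deathHistory_lt : MeasurableSet[deathHistory T t] {ω | t < T ω} := by
  have hmeas : Measurable[deathHistory T t] fun ω => if T ω ≤ t then (1:ℝ) else 0 :=
    comap_measurable _ |>.mono (le_iSup₂ (f := fun s (_ : s ∈ Iic t) =>
      MeasurableSpace.comap (fun ω => if T ω ≤ s then (1:ℝ) else 0) inferInstance)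
      t self_mem_Iic) le_rfl
  convert hmeas (measurableSet_singleton 0) using 1
  ext ω
  simp [not_le]

theorem deathHistory_le_withAtom :
    deathHistory T t ≤ MeasurableSpace.withAtom {ω | t < T ω} := by
  refine iSup₂_le fun s hs => MeasurableSpace.comap_le_withAtom fun ω hω ω' hω' => ?_
  simp [not_le.2 ((mem_Iic.1 hs).trans_lt hω), not_le.2 ((mem_Iic.1 hs).trans_lt hω')]

end Atom

namespace MeasureTheory

section Lifetime

variable {Ω : Type*} [MeasurableSpace Ω] {P : Measure Ω} [IsFiniteMeasure P] {T : Ω → ℝ}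
  {F f : ℝ → ℝ}

theorem nonneg_of_hasDerivAt_survival (hF : ∀ x, P.real {ω | x < T ω} = F x)
    (hFf : ∀ x, HasDerivAt F (-f x) x) (x : ℝ) : 0 ≤ f x := by
  have hanti : Antitone F := fun a b hab => by
    rw [← hF a, ← hF b]
    exact measureReal_mono fun ω hω => hab.trans_lt hω
  have := hanti.deriv_nonpos (x := x)
  rw [(hFf x).deriv] at this
  linarith

theorem map_eq_withDensity_of_hasDerivAt_survival (hT : Measurable T)
    (hF : ∀ x, P.real {ω | x < T ω} = F x) (hFf : ∀ x, HasDerivAt F (-f x) x)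
    (hf : Continuous f) :
    P.map T = volume.withDensity (fun x => ENNReal.ofReal (f x)) := by
  refine Measure.ext_of_Ioc _ _ fun a b hab => ?_
  have hpre : T ⁻¹' Ioc a b = {ω | a < T ω} \ {ω | b < T ω} := by
    ext ω
    simp [not_lt]
  have hFTC : ∫ x in a..b, f x = F a - F b := by
    rw [intervalIntegral.integral_eq_sub_of_hasDerivAt (f := -F)
      (fun x _ => by simpa using (hFf x).neg) (hf.intervalIntegrable a b), Pi.neg_apply,
      Pi.neg_apply]
    ring
  rw [Measure.map_apply hT measurableSet_Ioc, withDensity_apply _ measurableSet_Ioc,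
    ← ofReal_integral_eq_lintegral_ofReal hf.integrableOn_Ioc
      (ae_of_all _ (nonneg_of_hasDerivAt_survival hF hFf)),
    ← intervalIntegral.integral_of_le hab.le, hFTC, ← ofReal_measureReal, hpre,
    measureReal_sdiff (show {ω | b < T ω} ⊆ {ω | a < T ω} from fun ω hω => hab.trans hω)
      (hT measurableSet_Ioi), hF, hF]

theorem integral_indicator_comp_eq_intervalIntegral (hT : Measurable T)
    (hF : ∀ x, P.real {ω | x < T ω} = F x) (hFf : ∀ x, HasDerivAt F (-f x) x)
    (hf : Continuous f) {h : ℝ → ℝ} (hh : Continuous h) {a b : ℝ} (hab : a ≤ b) :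
    ∫ ω, (Ioc a b).indicator h (T ω) ∂P = ∫ x in a..b, h x * f x := by
  rw [← integral_map hT.aemeasurable
      (hh.measurable.indicator measurableSet_Ioc).aestronglyMeasurable,
    map_eq_withDensity_of_hasDerivAt_survival hT hF hFf hf, integral_indicator measurableSet_Ioc,
    setIntegral_withDensity_eq_setIntegral_toReal_smul hf.measurable.ennreal_ofReal
      (ae_of_all _ fun _ => ENNReal.ofReal_lt_top) _ measurableSet_Ioc,
    intervalIntegral.integral_of_le hab]
  refine setIntegral_congr_fun measurableSet_Ioc fun x _ => ?_
  rw [ENNReal.toReal_ofReal (nonneg_of_hasDerivAt_survival hF hFf x), smul_eq_mul, mul_comm]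

variable {g : ℝ → ℝ} {a b : ℝ}

theorem integrable_prod_ite_lt (hT : Measurable T) (hg : IntervalIntegrable g volume a b) :
    Integrable (fun p : ℝ × Ω => if p.1 < T p.2 then g p.1 else 0)
      ((volume.restrict (uIoc a b)).prod P) := by
  have hmeas : MeasurableSet {p : ℝ × Ω | p.1 < T p.2} :=
    measurableSet_lt measurable_fst (hT.comp measurable_snd)
  have hg' : Integrable g (volume.restrict (uIoc a b)) := hg.def'
  exact ((hg'.comp_fst P).indicator hmeas).congr
    (ae_of_all _ fun p => by simp [indicator_apply])

theorem integrable_intervalIntegral_ite_lt (hT : Measurable T)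
    (hg : IntervalIntegrable g volume a b) (hab : a ≤ b) :
    Integrable (fun ω => ∫ r in a..b, if r < T ω then g r else 0) P := by
  have := (integrable_prod_ite_lt (P := P) hT hg).integral_prod_right
  simp only [uIoc_of_le hab] at this
  simpa only [intervalIntegral.integral_of_le hab] using this

theorem integral_intervalIntegral_ite_lt (hT : Measurable T)
    (hg : IntervalIntegrable g volume a b) :
    ∫ ω, (∫ r in a..b, if r < T ω then g r else 0) ∂P
      = ∫ r in a..b, g r * P.real {ω | r < T ω} := by
  rw [← intervalIntegral_integral_swap (integrable_prod_ite_lt hT hg)]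
  refine intervalIntegral.integral_congr fun r _ => ?_
  have hind := integral_indicator_const (μ := P) (g r)
    (measurableSet_lt measurable_const hT : MeasurableSet {ω | r < T ω})
  rwa [smul_eq_mul, mul_comm] at hind

end Lifetime

end MeasureTheory

theorem hasDerivAt_exp_neg_integral {g : ℝ → ℝ} (hg : Continuous g) (x : ℝ) :
    HasDerivAt (fun y => Real.exp (-(∫ r in (0:ℝ)..y, g r)))
      (-(g x * Real.exp (-(∫ r in (0:ℝ)..x, g r)))) x :=
  ((hg.integral_hasStrictDerivAt 0 x).hasDerivAt.neg.exp).congr_deriv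
    (by simp only [Pi.neg_apply]; ring)

theorem thiele_integral_eq {δ μ Prem S V v F : ℝ → ℝ} {t n : ℝ} (htn : t ≤ n)
    (hμ : Continuous μ) (hPrem : Continuous Prem) (hS : Continuous S)
    (hv : ∀ x, HasDerivAt v (-(δ x * v x)) x) (hF : ∀ x, HasDerivAt F (-(μ x * F x)) x)
    (hV : ∀ x ∈ Icc t n, HasDerivAt V (δ x * V x + Prem x - μ x * (S x - V x)) x) :
    v t * F t * V t = v n * F n * V n + ∫ x in t..n, v x * F x * (μ x * S x - Prem x) := by
  have hvc : Continuous v := continuous_iff_continuousAt.2 fun x => (hv x).continuousAt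
  have hFc : Continuous F := continuous_iff_continuousAt.2 fun x => (hF x).continuousAt
  have hderiv : ∀ x ∈ uIcc t n, HasDerivAt (fun y => -(v y * F y * V y))
      (v x * F x * (μ x * S x - Prem x)) x := by
    intro x hx
    rw [uIcc_of_le htn] at hx
    exact (((hv x).mul (hF x)).mul (hV x hx)).neg.congr_deriv
      (by simp only [Pi.mul_apply]; ring)
  rw [intervalIntegral.integral_eq_sub_of_hasDerivAt hderiv
    ((by fun_prop : Continuous fun x => v x * F x * (μ x * S x - Prem x)).intervalIntegrable t n)]
  ring

section NetOutgo

variable (v Prem S : ℝ → ℝ) (n Sbar t : ℝ)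

/-- `∫_{(t,n]} (v r / v t) d(-B)(r)` for a policyholder whose lifetime is `τ`. -/
noncomputable def discountedNetOutgo (τ : ℝ) : ℝ :=
  -(∫ r in t..n, (v r / v t) * (if r < τ then Prem r else 0))
    + (if t < τ ∧ τ ≤ n then (v τ / v t) * S τ else 0)
    + (if n < τ then (v n / v t) * Sbar else 0)

theorem discountedNetOutgo_eq_indicator (τ : ℝ) :
    discountedNetOutgo v Prem S n Sbar t τ =
      -(∫ r in t..n, if r < τ then v r / v t * Prem r else 0)
        + (Ioc t n).indicator (fun x => v x / v t * S x) τ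
        + (Ioi n).indicator (fun _ => v n / v t * Sbar) τ := by
  simp only [discountedNetOutgo, mul_ite, mul_zero, indicator_apply, mem_Ioc, mem_Ioi]

variable {v Prem S n Sbar t}

theorem discountedNetOutgo_of_le {τ : ℝ} (hτ : τ ≤ t) (htn : t ≤ n) :
    discountedNetOutgo v Prem S n Sbar t τ = 0 := by
  have hprem : (∫ r in t..n, (v r / v t) * (if r < τ then Prem r else 0)) = 0 := by
    refine (intervalIntegral.integral_congr (g := fun _ => 0) fun r hr => ?_).trans
      intervalIntegral.integral_zero
    rw [uIcc_of_le htn] at hr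
    simp [not_lt.2 (hτ.trans hr.1)]
  rw [discountedNetOutgo, hprem]
  simp [not_lt.2 hτ, not_lt.2 (hτ.trans htn)]

end NetOutgo

section ExpectedNetOutgo

variable {Ω : Type*} [MeasurableSpace Ω] {P : Measure Ω} [IsFiniteMeasure P] {T : Ω → ℝ}
  {v Prem S : ℝ → ℝ} {n Sbar t : ℝ}

theorem integrable_discountedNetOutgo (hT : Measurable T) (hv : Continuous v)
    (hPrem : Continuous Prem) (hS : Continuous S) (htn : t ≤ n) :
    Integrable (fun ω => discountedNetOutgo v Prem S n Sbar t (T ω)) P := by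
  have hdeath : IntegrableOn (fun x => v x / v t * S x) (Ioc t n) (P.map T) :=
    (by fun_prop : Continuous fun x => v x / v t * S x).integrableOn_Ioc
  simp_rw [discountedNetOutgo_eq_indicator]
  exact ((integrable_intervalIntegral_ite_lt hT
    ((by fun_prop : Continuous fun r => v r / v t * Prem r).intervalIntegrable t n) htn).neg.add
    ((hdeath.integrable_indicator measurableSet_Ioc).comp_measurable hT)).add
    (((integrable_const _).indicator measurableSet_Ioi).comp_measurable hT)

theorem integral_discountedNetOutgo_eq_intervalIntegral {μ F : ℝ → ℝ} (hT : Measurable T)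
    (hF : ∀ x, P.real {ω | x < T ω} = F x) (hFμ : ∀ x, HasDerivAt F (-(μ x * F x)) x)
    (hμ : Continuous μ) (hv : Continuous v) (hPrem : Continuous Prem) (hS : Continuous S)
    (htn : t ≤ n) :
    ∫ ω, discountedNetOutgo v Prem S n Sbar t (T ω) ∂P
      = -(∫ r in t..n, v r / v t * Prem r * F r)
        + (∫ x in t..n, v x / v t * S x * (μ x * F x)) + F n * (v n / v t * Sbar) := by
  have hFc : Continuous F := continuous_iff_continuousAt.2 fun x => (hFμ x).continuousAt
  have hpremInt : IntervalIntegrable (fun r => v r / v t * Prem r) volume t n :=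
    (by fun_prop : Continuous fun r => v r / v t * Prem r).intervalIntegrable t n
  have hdeath : IntegrableOn (fun x => v x / v t * S x) (Ioc t n) (P.map T) :=
    (by fun_prop : Continuous fun x => v x / v t * S x).integrableOn_Ioc
  have hI1 : Integrable (fun ω => ∫ r in t..n, if r < T ω then v r / v t * Prem r else 0) P :=
    integrable_intervalIntegral_ite_lt hT hpremInt htn
  have hI2 : Integrable (fun ω => (Ioc t n).indicator (fun x => v x / v t * S x) (T ω)) P :=
    (hdeath.integrable_indicator measurableSet_Ioc).comp_measurable hT
  have hI3 : Integrable (fun ω => (Ioi n).indicator (fun _ => v n / v t * Sbar) (T ω)) P :=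
    ((integrable_const _).indicator measurableSet_Ioi).comp_measurable hT
  have hmaturity : ∫ ω, (Ioi n).indicator (fun _ => v n / v t * Sbar) (T ω) ∂P
      = F n * (v n / v t * Sbar) := by
    have := integral_indicator_const (μ := P) (v n / v t * Sbar)
      (measurableSet_lt measurable_const hT : MeasurableSet {ω | n < T ω})
    rwa [smul_eq_mul, hF n] at this
  have hsplit : ∫ ω, discountedNetOutgo v Prem S n Sbar t (T ω) ∂P
      = -(∫ ω, (∫ r in t..n, if r < T ω then v r / v t * Prem r else 0) ∂P)
        + ∫ ω, (Ioc t n).indicator (fun x => v x / v t * S x) (T ω) ∂P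
        + ∫ ω, (Ioi n).indicator (fun _ => v n / v t * Sbar) (T ω) ∂P := by
    simp_rw [discountedNetOutgo_eq_indicator]
    rw [← integral_neg]
    exact (integral_add (hI1.neg.add hI2) hI3).trans
      (congrArg (· + _) (integral_add hI1.neg hI2))
  rw [hsplit, integral_intervalIntegral_ite_lt hT hpremInt,
    integral_indicator_comp_eq_intervalIntegral (f := fun x => μ x * F x) hT hF hFμ
      (by fun_prop) (by fun_prop) htn, hmaturity]
  simp_rw [hF]

theorem integral_discountedNetOutgo {δ μ F V : ℝ → ℝ} (hT : Measurable T)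
    (hF : ∀ x, P.real {ω | x < T ω} = F x) (hFμ : ∀ x, HasDerivAt F (-(μ x * F x)) x)
    (hμ : Continuous μ) (hv : ∀ x, HasDerivAt v (-(δ x * v x)) x) (hvt : v t ≠ 0)
    (hPrem : Continuous Prem) (hS : Continuous S)
    (hV : ∀ x ∈ Icc t n, HasDerivAt V (δ x * V x + Prem x - μ x * (S x - V x)) x)
    (htn : t ≤ n) :
    ∫ ω, discountedNetOutgo v Prem S n (V n) t (T ω) ∂P = F t * V t := by
  have hvc : Continuous v := continuous_iff_continuousAt.2 fun x => (hv x).continuousAt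
  have hFc : Continuous F := continuous_iff_continuousAt.2 fun x => (hFμ x).continuousAt
  have hdeath : Continuous fun x => v x / v t * S x * (μ x * F x) := by fun_prop
  have hprem : Continuous fun x => v x / v t * Prem x * F x := by fun_prop
  have hcomb : (∫ x in t..n, v x / v t * S x * (μ x * F x))
        - (∫ x in t..n, v x / v t * Prem x * F x)
      = (∫ x in t..n, v x * F x * (μ x * S x - Prem x)) / v t := by
    rw [← intervalIntegral.integral_sub (hdeath.intervalIntegrable (μ := volume) t n)
      (hprem.intervalIntegrable (μ := volume) t n), ← intervalIntegral.integral_div]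
    refine intervalIntegral.integral_congr fun x _ => ?_
    field_simp
  rw [integral_discountedNetOutgo_eq_intervalIntegral hT hF hFμ hμ hvc hPrem hS htn,
    neg_add_eq_sub, hcomb, eq_sub_of_add_eq' (thiele_integral_eq htn hμ hPrem hS hv hFμ hV).symm]
  field_simp
  ring

end ExpectedNetOutgo

theorem prospective_value_as_condexp_general
    {Ω : Type*} [m0 : MeasurableSpace Ω] (P : Measure Ω) [IsProbabilityMeasure P]
    (n Sbar : ℝ)
    (T : Ω → ℝ) (hT : Measurable T)
    (δ μ Prem S V : ℝ → ℝ)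
    (hδ : Continuous δ) (hμ : Continuous μ)
    (hPrem : Continuous Prem) (hS : Continuous S)
    -- under P, T has hazard rate μ
    (hTlaw : ∀ t : ℝ, P {ω | t < T ω}
      = ENNReal.ofReal (Real.exp (-(∫ r in (0:ℝ)..t, μ r))))
    (v : ℝ → ℝ) (hv : ∀ t, v t = Real.exp (-(∫ r in (0:ℝ)..t, δ r)))
    -- V solves Thiele's equation with V(n) = S̄
    (hV : ∀ t ∈ Icc (0:ℝ) n,
      HasDerivAt V (δ t * V t + Prem t - μ t * (S t - V t)) t)
    (hVn : V n = Sbar)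
    (ℱ : Filtration ℝ m0)
    (hℱ : ∀ t, (ℱ t : MeasurableSpace Ω) = ⨆ s ∈ Iic t,
      MeasurableSpace.comap (fun ω => if T ω ≤ s then (1:ℝ) else 0) inferInstance)
    -- Y t = ∫_{(t,n]} (v r / v t) d(-B)(r) : discounted future benefits less premiums
    (Y : ℝ → Ω → ℝ)
    (hY : ∀ t ω, Y t ω =
      -(∫ r in t..n, (v r / v t) * (if r < T ω then Prem r else 0))
      + (if t < T ω ∧ T ω ≤ n then (v (T ω) / v t) * S (T ω) else 0)
      + (if n < T ω then (v n / v t) * Sbar else 0)) :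
    ∀ t ∈ Icc (0:ℝ) n,
      (fun ω => (if t < T ω then (1:ℝ) else 0) * V t) =ᵐ[P] P[Y t | ℱ t] := by
  rintro t ⟨ht0, htn⟩
  have hF : ∀ x, P.real {ω | x < T ω} = Real.exp (-(∫ r in (0:ℝ)..x, μ r)) := fun x => by
    rw [measureReal_def, hTlaw, ENNReal.toReal_ofReal (Real.exp_pos _).le]
  have hvδ : ∀ x, HasDerivAt v (-(δ x * v x)) x := by
    rw [funext hv]
    exact hasDerivAt_exp_neg_integral hδ
  have hvc : Continuous v := continuous_iff_continuousAt.2 fun x => (hvδ x).continuousAt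
  have hYt : Y t = fun ω => discountedNetOutgo v Prem S n (V n) t (T ω) := by
    rw [hVn]
    exact funext (hY t)
  have hB : MeasurableSet[ℱ t] {ω | t < T ω} := by
    rw [hℱ t]
    exact measurableSet_deathHistory_lt T t
  have hatom : ℱ t ≤ MeasurableSpace.withAtom {ω | t < T ω} := by
    rw [hℱ t]
    exact deathHistory_le_withAtom T t
  have hcond := indicator_ae_eq_condExp_of_le_withAtom (ℱ.le t) hB hatom
    (integrable_discountedNetOutgo hT hvc hPrem hS htn)
    (fun ω hω => discountedNetOutgo_of_le (not_lt.1 hω) htn)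
    (by rw [integral_discountedNetOutgo hT hF (hasDerivAt_exp_neg_integral hμ) hμ hvδ
      (hv t ▸ (Real.exp_pos _).ne') hPrem hS (fun x hx => hV x ⟨ht0.trans hx.1, hx.2⟩) htn,
      hF])
  rw [hYt]
  refine Filter.EventuallyEq.trans (ae_of_all _ fun ω => ?_) hcond
  by_cases h : t < T ω <;> simp [h]

/-- Stochastic interpretation of the prospective policy value: the deterministic
Thiele solution `V`, multiplied by the survival indicator, is a version of the
conditional expectation of the discounted future net outgo given `ℱ t`. -/
theorem prospective_value_as_condexp
    {Ω : Type*} [m0 : MeasurableSpace Ω] (P : Measure Ω) [IsProbabilityMeasure P]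
    (n Sbar : ℝ) (hn : 0 < n)
    (T : Ω → ℝ) (hT : Measurable T) (hTnn : ∀ ω, 0 ≤ T ω)
    (δ μ Prem S V : ℝ → ℝ)
    (hδ : Continuous δ) (hμ : Continuous μ)
    (hPrem : Continuous Prem) (hS : Continuous S)
    -- under P, T has hazard rate μ
    (hTlaw : ∀ t : ℝ, P {ω | t < T ω}
      = ENNReal.ofReal (Real.exp (-(∫ r in (0:ℝ)..t, μ r))))
    (v : ℝ → ℝ) (hv : ∀ t, v t = Real.exp (-(∫ r in (0:ℝ)..t, δ r)))
    -- V solves Thiele's equation with V(n) = S̄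
    (hV : ∀ t ∈ Icc (0:ℝ) n,
      HasDerivAt V (δ t * V t + Prem t - μ t * (S t - V t)) t)
    (hVn : V n = Sbar)
    (ℱ : Filtration ℝ m0)
    (hℱ : ∀ t, (ℱ t : MeasurableSpace Ω) = ⨆ s ∈ Iic t,
      MeasurableSpace.comap (fun ω => if T ω ≤ s then (1:ℝ) else 0) inferInstance)
    -- Y t = ∫_{(t,n]} (v r / v t) d(-B)(r) : discounted future benefits less premiums
    (Y : ℝ → Ω → ℝ)
    (hY : ∀ t ω, Y t ω =
      -(∫ r in t..n, (v r / v t) * (if r < T ω then Prem r else 0))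
      + (if t < T ω ∧ T ω ≤ n then (v (T ω) / v t) * S (T ω) else 0)
      + (if n < T ω then (v n / v t) * Sbar else 0)) :
    ∀ t ∈ Icc (0:ℝ) n,
      (fun ω => (if t < T ω then (1:ℝ) else 0) * V t) =ᵐ[P] P[Y t | ℱ t] :=
  prospective_value_as_condexp_general (m0 := m0) P n Sbar T hT δ μ Prem S V hδ hμ hPrem hS hTlaw v
    hv hV hVn ℱ hℱ Y hY
end

section
/- Under the single-life model with hazard μ and discount v(t) = exp(-∫₀ᵗδ), if W solves Thiele's equation W'(t) = δ(t)W(t) + P(t) - μ(t)(S(t)-W(t)) with W(0)=0, then W(t) = φ(t)⁻¹ · E[ ∫₀ᵗ v(r) dB(r) ], where φ(t) = v(t)·exp(-∫₀ᵗμ) and dB(r) = 1_{T>r}P(r)dr - S(r)dN(r). -/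
/-!
Under the hazard model `P(T > r) = p(r)`, the law of `T` has density `μ p` on `(0, ∞)`, so by
Fubini for the premiums and a change of variables for the death benefit the expected discounted
payments up to `t` equal `∫₀ᵗ v p (Prem - μ S)`. By the product rule, Thiele's equation says that
this integrand is the derivative of `φ W = v p W`, which vanishes at `0`.
-/

open MeasureTheory Set

theorem hasDerivAt_of_eq_exp_neg_integral {v f : ℝ → ℝ} {a : ℝ} (hf : Continuous f)
    (hv : ∀ t, v t = Real.exp (-∫ r in a..t, f r)) (x : ℝ) :
    HasDerivAt v (-f x * v x) x := by
  rw [funext hv]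
  exact ((hf.integral_hasStrictDerivAt a x).hasDerivAt.fun_neg).exp.congr_deriv (by ring)

theorem sub_eq_integral_of_thiele {δ μ Prem S W v p : ℝ → ℝ} {a b t : ℝ}
    (hv : ∀ s, HasDerivAt v (-δ s * v s) s) (hp : ∀ s, HasDerivAt p (-μ s * p s) s)
    (hW : ∀ s ∈ Icc a b, HasDerivAt W (δ s * W s + Prem s - μ s * (S s - W s)) s)
    (hint : IntervalIntegrable (fun r => v r * p r * (Prem r - μ r * S r)) volume a t)
    (ht : t ∈ Icc a b) :
    v t * p t * W t - v a * p a * W a = ∫ r in a..t, v r * p r * (Prem r - μ r * S r) := by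
  refine (intervalIntegral.integral_eq_sub_of_hasDerivAt (f := fun s => v s * p s * W s)
    (fun s hs => ?_) hint).symm
  rw [uIcc_of_le ht.1] at hs
  exact (((hv s).fun_mul (hp s)).fun_mul (hW s ⟨hs.1, hs.2.trans ht.2⟩)).congr_deriv (by ring)

section Survival

variable {Ω : Type*} [MeasurableSpace Ω] {P : Measure Ω} {X : Ω → ℝ} {p f : ℝ → ℝ}

theorem antitone_of_survival (hsurv : ∀ t, P {ω | t < X ω} = ENNReal.ofReal (p t))
    (hp_nonneg : ∀ t, 0 ≤ p t) : Antitone p := fun s u hsu => by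
  have hmono : P {ω | u < X ω} ≤ P {ω | s < X ω} := measure_mono fun ω hω => hsu.trans_lt hω
  rwa [hsurv, hsurv, ENNReal.ofReal_le_ofReal_iff (hp_nonneg s)] at hmono

theorem density_nonneg_of_survival (hsurv : ∀ t, P {ω | t < X ω} = ENNReal.ofReal (p t))
    (hp_nonneg : ∀ t, 0 ≤ p t) (hp : ∀ t, HasDerivAt p (-f t) t) (t : ℝ) : 0 ≤ f t :=
  neg_nonpos.1 ((hp t).nonpos_of_antitone (antitone_of_survival hsurv hp_nonneg))

theorem map_eq_withDensity_of_survival [IsProbabilityMeasure P] (hX : Measurable X)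
    (hsurv : ∀ t, P {ω | t < X ω} = ENNReal.ofReal (p t)) (hp_nonneg : ∀ t, 0 ≤ p t)
    (hp0 : p 0 = 1) (hp : ∀ t, HasDerivAt p (-f t) t) (hf : Continuous f) :
    P.map X = volume.withDensity ((Ioi 0).indicator fun r => ENNReal.ofReal (f r)) := by
  refine Measure.ext_of_Iic _ _ fun a => ?_
  have hcdf : P.map X (Iic a) = ENNReal.ofReal (1 - p a) := by
    have hcompl : X ⁻¹' Iic a = {ω | a < X ω}ᶜ := by ext ω; simp
    rw [Measure.map_apply hX measurableSet_Iic, hcompl,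
      prob_compl_eq_one_sub (s := {ω | a < X ω}) (hX measurableSet_Ioi), hsurv,
      ENNReal.ofReal_sub _ (hp_nonneg a), ENNReal.ofReal_one]
  rw [hcdf, withDensity_apply _ measurableSet_Iic, lintegral_indicator measurableSet_Ioi,
    Measure.restrict_restrict measurableSet_Ioi, Ioi_inter_Iic]
  rcases lt_or_ge a 0 with ha | ha
  · have hpa : 1 ≤ p a := hp0 ▸ antitone_of_survival hsurv hp_nonneg ha.le
    rw [Ioc_eq_empty ha.not_gt, Measure.restrict_empty, lintegral_zero_measure,
      ENNReal.ofReal_eq_zero]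
    linarith
  · have hFTC : ∫ r in (0:ℝ)..a, f r = 1 - p a := by
      rw [intervalIntegral.integral_eq_sub_of_hasDerivAt (f := fun t => -p t)
        (fun t _ => (hp t).neg.congr_deriv (neg_neg _)) (hf.intervalIntegrable _ _), hp0]
      ring
    rw [← ofReal_integral_eq_lintegral_ofReal hf.integrableOn_Ioc
      (ae_of_all _ (density_nonneg_of_survival hsurv hp_nonneg hp)),
      ← intervalIntegral.integral_of_le ha, hFTC]

theorem integrable_indicator_comp [IsFiniteMeasure P] (hX : Measurable X) {g : ℝ → ℝ}
    (hg : Continuous g) (a b : ℝ) :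
    Integrable (fun ω => (Ioc a b).indicator g (X ω)) P := by
  refine Integrable.comp_measurable (g := (Ioc a b).indicator g) ?_ hX
  exact (hg.integrableOn_Icc.mono_set Ioc_subset_Icc_self).integrable_indicator measurableSet_Ioc

theorem integral_indicator_comp_of_survival [IsProbabilityMeasure P] (hX : Measurable X)
    (hsurv : ∀ t, P {ω | t < X ω} = ENNReal.ofReal (p t)) (hp_nonneg : ∀ t, 0 ≤ p t)
    (hp0 : p 0 = 1) (hp : ∀ t, HasDerivAt p (-f t) t) (hf : Continuous f) {g : ℝ → ℝ}
    (hg : Continuous g) {b : ℝ} (hb : 0 ≤ b) :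
    ∫ ω, (Ioc 0 b).indicator g (X ω) ∂P = ∫ r in (0:ℝ)..b, f r * g r := by
  rw [← integral_map hX.aemeasurable
      (hg.measurable.indicator measurableSet_Ioc).aestronglyMeasurable,
    map_eq_withDensity_of_survival hX hsurv hp_nonneg hp0 hp hf,
    integral_indicator measurableSet_Ioc,
    setIntegral_withDensity_eq_setIntegral_toReal_smul' _
      (hf.measurable.ennreal_ofReal.indicator measurableSet_Ioi)
      (ae_of_all _ fun r => (indicator_le_self _ _ r).trans_lt ENNReal.ofReal_lt_top),
    intervalIntegral.integral_of_le hb]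
  refine setIntegral_congr_fun measurableSet_Ioc fun r hr => ?_
  rw [indicator_of_mem (show r ∈ Ioi 0 from hr.1), ENNReal.toReal_ofReal
    (density_nonneg_of_survival hsurv hp_nonneg hp r), smul_eq_mul]

theorem integrable_ite_lt_prod [IsFiniteMeasure P] (hX : Measurable X) {h : ℝ → ℝ}
    {s : Set ℝ} (hh : IntegrableOn h s) :
    Integrable (fun z : Ω × ℝ => if z.2 < X z.1 then h z.2 else 0)
      (P.prod (volume.restrict s)) := by
  refine ((hh.comp_snd P).indicator (measurableSet_lt measurable_snd
    (hX.comp measurable_fst))).congr (ae_of_all _ fun z => ?_)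
  simp [indicator_apply]

theorem integrable_intervalIntegral_ite_lt [IsFiniteMeasure P] (hX : Measurable X)
    {h : ℝ → ℝ} {a b : ℝ} (hab : a ≤ b) (hh : IntervalIntegrable h volume a b) :
    Integrable (fun ω => ∫ r in a..b, if r < X ω then h r else 0) P := by
  simp_rw [intervalIntegral.integral_of_le hab]
  exact (integrable_ite_lt_prod hX hh.1).integral_prod_left

theorem integral_intervalIntegral_ite_lt [IsFiniteMeasure P] (hX : Measurable X)
    {h : ℝ → ℝ} {a b : ℝ} (hab : a ≤ b) (hh : IntervalIntegrable h volume a b) :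
    ∫ ω, (∫ r in a..b, if r < X ω then h r else 0) ∂P
      = ∫ r in a..b, P.real {ω | r < X ω} * h r := by
  simp_rw [intervalIntegral.integral_of_le hab]
  rw [integral_integral_swap (integrable_ite_lt_prod hX hh.1)]
  refine setIntegral_congr_fun measurableSet_Ioc fun r _ => ?_
  rw [← smul_eq_mul, ← integral_indicator_const (s := {ω | r < X ω}) (h r) (hX measurableSet_Ioi)]
  congr 1 with ω

theorem integral_discounted_payments_of_survival [IsProbabilityMeasure P] (hX : Measurable X)
    {μ v Prem S : ℝ → ℝ} (hsurv : ∀ t, P {ω | t < X ω} = ENNReal.ofReal (p t))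
    (hp_nonneg : ∀ t, 0 ≤ p t) (hp0 : p 0 = 1) (hp : ∀ t, HasDerivAt p (-(μ t * p t)) t)
    (hμ : Continuous μ) (hv : Continuous v) (hPrem : Continuous Prem) (hS : Continuous S)
    {b : ℝ} (hb : 0 ≤ b) :
    ∫ ω, ((∫ r in (0:ℝ)..b, v r * (if r < X ω then Prem r else 0))
        - (if 0 < X ω ∧ X ω ≤ b then v (X ω) * S (X ω) else 0)) ∂P
      = ∫ r in (0:ℝ)..b, v r * p r * (Prem r - μ r * S r) := by
  have hpc : Continuous p := continuous_iff_continuousAt.2 fun t => (hp t).continuousAt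
  have hpremium : ∫ ω, (∫ r in (0:ℝ)..b, if r < X ω then v r * Prem r else 0) ∂P
      = ∫ r in (0:ℝ)..b, v r * p r * Prem r := by
    rw [integral_intervalIntegral_ite_lt hX hb ((hv.fun_mul hPrem).intervalIntegrable _ _)]
    congr 1 with r
    rw [measureReal_def, hsurv, ENNReal.toReal_ofReal (hp_nonneg r)]
    ring
  have hdeath : ∫ ω, (Ioc 0 b).indicator (fun r => v r * S r) (X ω) ∂P
      = ∫ r in (0:ℝ)..b, v r * p r * (μ r * S r) := by
    rw [integral_indicator_comp_of_survival hX hsurv hp_nonneg hp0 hp (hμ.fun_mul hpc)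
      (hv.fun_mul hS) hb]
    congr 1 with r
    ring
  have hdeath_indicator : ∀ ω, (if 0 < X ω ∧ X ω ≤ b then v (X ω) * S (X ω) else 0)
      = (Ioc 0 b).indicator (fun r => v r * S r) (X ω) := fun ω => by
    simp only [indicator_apply, mem_Ioc]
  simp_rw [mul_ite, mul_zero, hdeath_indicator]
  rw [integral_sub (integrable_intervalIntegral_ite_lt hX hb
      ((hv.fun_mul hPrem).intervalIntegrable _ _))
      (integrable_indicator_comp hX (hv.fun_mul hS) 0 b),
    hpremium, hdeath, ← intervalIntegral.integral_sub
      (((hv.fun_mul hpc).fun_mul hPrem).intervalIntegrable _ _)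
      (((hv.fun_mul hpc).fun_mul (hμ.fun_mul hS)).intervalIntegrable _ _)]
  simp_rw [← mul_sub]

end Survival

theorem accumulation_as_scaled_expectation_general
    {Ω : Type*} [m0 : MeasurableSpace Ω] (P : Measure Ω) [IsProbabilityMeasure P]
    (n : ℝ)
    (T : Ω → ℝ) (hT : Measurable T)
    (δ μ Prem S W : ℝ → ℝ)
    (hδ : Continuous δ) (hμ : Continuous μ)
    (hPrem : Continuous Prem) (hS : Continuous S)
    -- under P, T has hazard rate μ
    (hTlaw : ∀ t : ℝ, P {ω | t < T ω}
      = ENNReal.ofReal (Real.exp (-(∫ r in (0:ℝ)..t, μ r))))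
    (v p φ : ℝ → ℝ)
    (hv : ∀ t, v t = Real.exp (-(∫ r in (0:ℝ)..t, δ r)))
    (hp : ∀ t, p t = Real.exp (-(∫ r in (0:ℝ)..t, μ r)))
    (hφ : ∀ t, φ t = v t * p t)
    -- W solves Thiele's equation with W(0) = 0
    (hW : ∀ t ∈ Icc (0:ℝ) n,
      HasDerivAt W (δ t * W t + Prem t - μ t * (S t - W t)) t)
    (hW0 : W 0 = 0) :
    ∀ t ∈ Icc (0:ℝ) n,
      W t = (φ t)⁻¹ *
        ∫ ω, ((∫ r in (0:ℝ)..t, v r * (if r < T ω then Prem r else 0))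
          - (if 0 < T ω ∧ T ω ≤ t then v (T ω) * S (T ω) else 0)) ∂P := by
  intro t ht
  have hv' := hasDerivAt_of_eq_exp_neg_integral hδ hv
  have hp' := hasDerivAt_of_eq_exp_neg_integral hμ hp
  have hvc : Continuous v := continuous_iff_continuousAt.2 fun s => (hv' s).continuousAt
  have hpc : Continuous p := continuous_iff_continuousAt.2 fun s => (hp' s).continuousAt
  have hv_pos : ∀ s, 0 < v s := fun s => hv s ▸ Real.exp_pos _
  have hp_pos : ∀ s, 0 < p s := fun s => hp s ▸ Real.exp_pos _
  have hthiele := sub_eq_integral_of_thiele hv' hp' hW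
    (((hvc.fun_mul hpc).fun_mul (hPrem.fun_sub (hμ.fun_mul hS))).intervalIntegrable _ _) ht
  rw [hW0, mul_zero, sub_zero] at hthiele
  rw [integral_discounted_payments_of_survival hT (fun s => by rw [hTlaw, hp])
      (fun s => (hp_pos s).le) (by simp [hp]) (fun s => by simpa using hp' s)
      hμ hvc hPrem hS ht.1,
    ← hthiele, hφ, inv_mul_cancel_left₀ (mul_pos (hv_pos t) (hp_pos t)).ne']

/-- The accumulation (retrospective reserve) as a scaled expectation of
discounted past cashflows: `W(t) = φ(t)⁻¹ · E[∫₀ᵗ v(r) dB(r)]`. -/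
theorem accumulation_as_scaled_expectation
    {Ω : Type*} [m0 : MeasurableSpace Ω] (P : Measure Ω) [IsProbabilityMeasure P]
    (n : ℝ) (hn : 0 < n)
    (T : Ω → ℝ) (hT : Measurable T) (hTnn : ∀ ω, 0 ≤ T ω)
    (δ μ Prem S W : ℝ → ℝ)
    (hδ : Continuous δ) (hμ : Continuous μ)
    (hPrem : Continuous Prem) (hS : Continuous S)
    -- under P, T has hazard rate μ
    (hTlaw : ∀ t : ℝ, P {ω | t < T ω}
      = ENNReal.ofReal (Real.exp (-(∫ r in (0:ℝ)..t, μ r))))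
    (v p φ : ℝ → ℝ)
    (hv : ∀ t, v t = Real.exp (-(∫ r in (0:ℝ)..t, δ r)))
    (hp : ∀ t, p t = Real.exp (-(∫ r in (0:ℝ)..t, μ r)))
    (hφ : ∀ t, φ t = v t * p t)
    -- W solves Thiele's equation with W(0) = 0
    (hW : ∀ t ∈ Icc (0:ℝ) n,
      HasDerivAt W (δ t * W t + Prem t - μ t * (S t - W t)) t)
    (hW0 : W 0 = 0) :
    ∀ t ∈ Icc (0:ℝ) n,
      W t = (φ t)⁻¹ *
        ∫ ω, ((∫ r in (0:ℝ)..t, v r * (if r < T ω then Prem r else 0))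
          - (if 0 < T ω ∧ T ω ≤ t then v (T ω) * S (T ω) else 0)) ∂P :=
  accumulation_as_scaled_expectation_general (m0 := m0) P n T hT δ μ Prem S W hδ hμ hPrem hS hTlaw v
    p φ hv hp hφ hW hW0
end

section
/- Discounted surpluses over non-overlapping time intervals are uncorrelated: with discounted surplus Θ̃(t) = -∫₀ᵗ v(r)R(r)dM(r) where R(r)=S(r)-V(r) is bounded measurable and M is the compensated single-jump counting-process martingale, for 0 ≤ s ≤ t ≤ u ≤ w, E[(Θ̃(t)-Θ̃(s))(Θ̃(w)-Θ̃(u))] = 0. -/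
/-!
On `{T > u}` the earlier increment `Θ̃(t) - Θ̃(s)` is the deterministic number `∫ₛᵗ v R μ`
(no jump yet, and the compensator runs at full rate), while on `{T ≤ u}` the later increment
`Θ̃(w) - Θ̃(u)` vanishes (jump and compensator have both stopped). So the product is a constant
times the later increment, whose mean is zero: the law of `T` has density `μ(r) P(T > r)`, hence
`E[1{u < T ≤ w} f(T)] = ∫ᵤʷ f μ P(T > r) dr = E[∫ᵤʷ 1{r < T} f μ dr]` by Fubini.
-/

open MeasureTheory Set Real

namespace Hattendorff

/-- `exp (-∫₀ᵗ μ)`: the survival function for the hazard rate `μ`, and the discount factor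
`v` for the force of interest `δ`. -/
noncomputable def decayFactor (μ : ℝ → ℝ) (t : ℝ) : ℝ := exp (-∫ r in (0:ℝ)..t, μ r)

section DecayFactor

variable {μ : ℝ → ℝ}

theorem hasDerivAt_decayFactor (hμ : Continuous μ) (x : ℝ) :
    HasDerivAt (decayFactor μ) (-(μ x * decayFactor μ x)) x := by
  unfold decayFactor
  exact (intervalIntegral.integral_hasDerivAt_right (hμ.intervalIntegrable 0 x)
    (hμ.stronglyMeasurableAtFilter _ _) hμ.continuousAt).neg.exp.congr_deriv
    (by simp only [Pi.neg_apply]; ring)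

theorem continuous_decayFactor (hμ : Continuous μ) : Continuous (decayFactor μ) :=
  continuous_iff_continuousAt.2 fun x => (hasDerivAt_decayFactor hμ x).continuousAt

theorem decayFactor_pos (t : ℝ) : 0 < decayFactor μ t := exp_pos _

end DecayFactor

theorem eq_withDensity_of_measure_Ioi {ν : Measure ℝ} [IsFiniteMeasure ν] {G g : ℝ → ℝ}
    (hG : ∀ x, HasDerivAt G (-g x) x) (hg : Continuous g) (hg0 : ∀ x, 0 ≤ g x)
    (hG0 : ∀ t, 0 ≤ G t) (hν : ∀ t, ν (Ioi t) = ENNReal.ofReal (G t)) :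
    ν = volume.withDensity fun r => ENNReal.ofReal (g r) := by
  refine Measure.ext_of_Ioc _ _ fun c d hcd => ?_
  have hFTC : ∫ r in c..d, g r = G c - G d := by
    have hderiv : ∀ x ∈ uIcc c d, HasDerivAt (-G) (g x) x := fun x _ => by
      simpa using (hG x).neg
    rw [intervalIntegral.integral_eq_sub_of_hasDerivAt hderiv (hg.intervalIntegrable c d),
      Pi.neg_apply, Pi.neg_apply]
    ring
  rw [withDensity_apply _ measurableSet_Ioc,
    ← ofReal_integral_eq_lintegral_ofReal hg.integrableOn_Ioc (ae_of_all _ hg0),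
    ← intervalIntegral.integral_of_le hcd.le, hFTC, ENNReal.ofReal_sub _ (hG0 d), ← hν, ← hν,
    ← measure_sdiff (Ioi_subset_Ioi hcd.le) measurableSet_Ioi.nullMeasurableSet
      (measure_ne_top _ _), Ioi_sdiff_Ioi]

theorem intervalIntegrable_ite_lt {g : ℝ → ℝ} {a b : ℝ} (hg : IntervalIntegrable g volume a b)
    (τ : ℝ) : IntervalIntegrable (fun r => if r < τ then g r else 0) volume a b := by
  have h := (intervalIntegrable_iff.1 hg).indicator (measurableSet_Iio (a := τ))
  rw [intervalIntegrable_iff]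
  convert h using 2 with r
  simp [indicator_apply]

theorem exists_norm_mul_le_on_Icc {g R : ℝ → ℝ} {C : ℝ} (hg : Continuous g)
    (hRC : ∀ r, |R r| ≤ C) (a b : ℝ) : ∃ B, ∀ r ∈ Icc a b, ‖g r * R r‖ ≤ B := by
  obtain ⟨B, hB⟩ := isCompact_Icc.exists_bound_of_continuousOn (hg.continuousOn (s := Icc a b))
  refine ⟨B * C, fun r hr => ?_⟩
  rw [norm_mul]
  exact mul_le_mul (hB r hr) (hRC r) (norm_nonneg _) ((norm_nonneg _).trans (hB r hr))

theorem integrableOn_Icc_mul_of_norm_le {f g : ℝ → ℝ} {a b C : ℝ} (hf : Measurable f)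
    (hfC : ∀ r ∈ Icc a b, ‖f r‖ ≤ C) (hg : Continuous g) :
    IntegrableOn (fun r => f r * g r) (Icc a b) :=
  (Measure.integrableOn_of_bounded measure_Icc_lt_top.ne hf.aestronglyMeasurable
    ((ae_restrict_iff' measurableSet_Icc).2 (ae_of_all _ hfC))).mul_continuousOn
    hg.continuousOn isCompact_Icc

section CompensatedIncrement

variable {Ω : Type*} {T : Ω → ℝ} {f μ : ℝ → ℝ} {a b c : ℝ}

/-- The integral `∫_(a, b] f dM` against the compensated counting process
`M(t) = 1{T ≤ t} - ∫₀ᵗ 1{r < T} μ(r) dr`, computed pathwise. -/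
noncomputable def compensatedIncrement (T : Ω → ℝ) (f μ : ℝ → ℝ) (a b : ℝ) (ω : Ω) : ℝ :=
  (Ioc a b).indicator f (T ω) - ∫ r in a..b, if r < T ω then f r * μ r else 0

theorem compensatedIncrement_add (hfμ : IntervalIntegrable (fun r => f r * μ r) volume a c)
    (hab : a ≤ b) (hbc : b ≤ c) (ω : Ω) :
    compensatedIncrement T f μ a b ω + compensatedIncrement T f μ b c ω
      = compensatedIncrement T f μ a c ω := by
  have hsub : ∀ {x y}, x ∈ Icc a c → y ∈ Icc a c →
      IntervalIntegrable (fun r => if r < T ω then f r * μ r else 0) volume x y :=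
    fun hx hy => intervalIntegrable_ite_lt (hfμ.mono_set
      (uIcc_subset_uIcc (Icc_subset_uIcc hx) (Icc_subset_uIcc hy))) _
  have hb : b ∈ Icc a c := ⟨hab, hbc⟩
  simp only [compensatedIncrement]
  rw [← Ioc_union_Ioc_eq_Ioc hab hbc, indicator_union_of_disjoint (Ioc_disjoint_Ioc_of_le le_rfl),
    ← intervalIntegral.integral_add_adjacent_intervals (hsub (left_mem_Icc.2 (hab.trans hbc)) hb)
      (hsub hb (right_mem_Icc.2 (hab.trans hbc)))]
  ring

theorem compensatedIncrement_eq_zero_of_le (hab : a ≤ b) {ω : Ω} (hω : T ω ≤ a) :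
    compensatedIncrement T f μ a b ω = 0 := by
  have hintegrand : EqOn (fun r => if r < T ω then f r * μ r else 0) 0 (uIcc a b) :=
    fun r hr => if_neg (not_lt.2 (hω.trans (uIcc_of_le hab ▸ hr).1))
  simp [compensatedIncrement, intervalIntegral.integral_congr hintegrand,
    indicator_of_notMem (fun h : T ω ∈ Ioc a b => not_lt.2 hω h.1)]

theorem compensatedIncrement_of_lt (hab : a ≤ b) {ω : Ω} (hω : b < T ω) :
    compensatedIncrement T f μ a b ω = -∫ r in a..b, f r * μ r := by
  have hintegrand : EqOn (fun r => if r < T ω then f r * μ r else 0) (fun r => f r * μ r)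
      (uIcc a b) :=
    fun r hr => if_pos (((uIcc_of_le hab ▸ hr).2).trans_lt hω)
  simp [compensatedIncrement, intervalIntegral.integral_congr hintegrand,
    indicator_of_notMem (fun h : T ω ∈ Ioc a b => not_le.2 hω h.2)]

theorem compensatedIncrement_mul_of_le {s t u w : ℝ} (hst : s ≤ t) (htu : t ≤ u) (huw : u ≤ w)
    (ω : Ω) :
    compensatedIncrement T f μ s t ω * compensatedIncrement T f μ u w ω
      = -(∫ r in s..t, f r * μ r) * compensatedIncrement T f μ u w ω := by
  rcases le_or_gt (T ω) u with hω | hω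
  · rw [compensatedIncrement_eq_zero_of_le huw hω, mul_zero, mul_zero]
  · rw [compensatedIncrement_of_lt hst (htu.trans_lt hω)]

end CompensatedIncrement

section SingleLife

variable {Ω : Type*} [MeasurableSpace Ω] {P : Measure Ω} {T : Ω → ℝ} {μ f : ℝ → ℝ} {a b : ℝ}

theorem hazard_nonneg (hμ : Continuous μ)
    (hsurv : ∀ t, P {ω | t < T ω} = ENNReal.ofReal (decayFactor μ t)) (x : ℝ) : 0 ≤ μ x := by
  have hanti : Antitone (decayFactor μ) := fun s t hst => by
    have := measure_mono (μ := P)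
      (show {ω | t < T ω} ⊆ {ω | s < T ω} from fun ω hω => hst.trans_lt hω)
    rwa [hsurv, hsurv, ENNReal.ofReal_le_ofReal_iff (decayFactor_pos s).le] at this
  exact nonneg_of_mul_nonneg_left
    (neg_nonpos.1 ((hasDerivAt_decayFactor hμ x).nonpos_of_antitone hanti)) (decayFactor_pos x)

variable [IsFiniteMeasure P]

theorem map_eq_withDensity (hT : Measurable T) (hμ : Continuous μ)
    (hsurv : ∀ t, P {ω | t < T ω} = ENNReal.ofReal (decayFactor μ t)) :
    P.map T = volume.withDensity fun r => ENNReal.ofReal (μ r * decayFactor μ r) :=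
  eq_withDensity_of_measure_Ioi (hasDerivAt_decayFactor hμ) (hμ.mul (continuous_decayFactor hμ))
    (fun x => mul_nonneg (hazard_nonneg hμ hsurv x) (decayFactor_pos x).le)
    (fun t => (decayFactor_pos t).le)
    (fun t => by rw [Measure.map_apply hT measurableSet_Ioi]; exact hsurv t)

theorem integral_indicator_Ioc_comp (hT : Measurable T) (hμ : Continuous μ)
    (hsurv : ∀ t, P {ω | t < T ω} = ENNReal.ofReal (decayFactor μ t)) (hf : Measurable f)
    (hab : a ≤ b) :
    ∫ ω, (Ioc a b).indicator f (T ω) ∂P = ∫ r in a..b, f r * μ r * decayFactor μ r := by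
  have hdensity : Measurable fun r => μ r * decayFactor μ r :=
    (hμ.mul (continuous_decayFactor hμ)).measurable
  rw [← integral_map hT.aemeasurable (hf.indicator measurableSet_Ioc).aestronglyMeasurable,
    map_eq_withDensity hT hμ hsurv, integral_withDensity_eq_integral_toReal_smul
      hdensity.ennreal_ofReal (ae_of_all _ fun _ => ENNReal.ofReal_lt_top),
    intervalIntegral.integral_of_le hab, ← integral_indicator measurableSet_Ioc]
  congr 1 with r
  rw [ENNReal.toReal_ofReal (mul_nonneg (hazard_nonneg hμ hsurv r) (decayFactor_pos r).le)]
  by_cases hr : r ∈ Ioc a b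
  · simp only [indicator_of_mem hr, smul_eq_mul]; ring
  · simp [indicator_of_notMem hr]

theorem integrable_indicator_Ioc_comp {C : ℝ} (hT : Measurable T) (hf : Measurable f)
    (hfC : ∀ r ∈ Icc a b, ‖f r‖ ≤ C) :
    Integrable (fun ω => (Ioc a b).indicator f (T ω)) P :=
  (integrable_map_measure (hf.indicator measurableSet_Ioc).aestronglyMeasurable
    hT.aemeasurable).1 <| (integrable_indicator_iff measurableSet_Ioc).2 <|
    Measure.integrableOn_of_bounded (measure_ne_top _ _) hf.aestronglyMeasurable
      ((ae_restrict_iff' measurableSet_Ioc).2 <| ae_of_all _ fun r hr =>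
        hfC r (Ioc_subset_Icc_self hr))

theorem integrable_prod_ite_lt {h : ℝ → ℝ} (hT : Measurable T) (hh : IntegrableOn h (Ioc a b)) :
    Integrable (fun p : Ω × ℝ => if p.2 < T p.1 then h p.2 else 0)
      (P.prod (volume.restrict (Ioc a b))) := by
  refine ((hh.comp_snd P).indicator (measurableSet_lt measurable_snd
    (hT.comp measurable_fst))).congr (ae_of_all _ fun p => ?_)
  simp [indicator_apply]

theorem integrable_intervalIntegral_ite_lt {h : ℝ → ℝ} (hT : Measurable T)
    (hh : IntegrableOn h (Ioc a b)) (hab : a ≤ b) :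
    Integrable (fun ω => ∫ r in a..b, if r < T ω then h r else 0) P := by
  simp_rw [intervalIntegral.integral_of_le hab]
  exact (integrable_prod_ite_lt hT hh).integral_prod_left

theorem integral_intervalIntegral_ite_lt {h : ℝ → ℝ} (hT : Measurable T)
    (hh : IntegrableOn h (Ioc a b)) (hab : a ≤ b) :
    ∫ ω, (∫ r in a..b, if r < T ω then h r else 0) ∂P
      = ∫ r in a..b, h r * P.real {ω | r < T ω} := by
  simp_rw [intervalIntegral.integral_of_le hab]
  rw [integral_integral_swap (integrable_prod_ite_lt hT hh)]
  congr 1 with r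
  rw [mul_comm, ← smul_eq_mul,
    ← integral_indicator_const (s := {ω | r < T ω}) _ (hT measurableSet_Ioi)]
  congr 1 with ω

theorem integral_compensatedIncrement {C : ℝ} (hT : Measurable T) (hf : Measurable f)
    (hfC : ∀ r ∈ Icc a b, ‖f r‖ ≤ C) (hμ : Continuous μ)
    (hsurv : ∀ t, P {ω | t < T ω} = ENNReal.ofReal (decayFactor μ t)) (hab : a ≤ b) :
    ∫ ω, compensatedIncrement T f μ a b ω ∂P = 0 := by
  have hfμ := (integrableOn_Icc_mul_of_norm_le hf hfC hμ).mono_set Ioc_subset_Icc_self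
  have hsurv_real : ∀ r, P.real {ω | r < T ω} = decayFactor μ r := fun r => by
    rw [measureReal_def, hsurv, ENNReal.toReal_ofReal (decayFactor_pos r).le]
  simp only [compensatedIncrement]
  rw [integral_sub (integrable_indicator_Ioc_comp hT hf hfC)
      (integrable_intervalIntegral_ite_lt hT hfμ hab),
    integral_indicator_Ioc_comp hT hμ hsurv hf hab, integral_intervalIntegral_ite_lt hT hfμ hab,
    sub_eq_zero]
  simp only [hsurv_real]

end SingleLife

end Hattendorff

open Hattendorff

theorem hattendorff_uncorrelated_increments_general
    {Ω : Type*} [m0 : MeasurableSpace Ω] (P : Measure Ω) [IsProbabilityMeasure P]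
    (T : Ω → ℝ) (hT : Measurable T)
    (δ μ R : ℝ → ℝ)
    (hδ : Continuous δ) (hμ : Continuous μ)
    (hR : Measurable R) (hRb : ∃ C, ∀ r, |R r| ≤ C)
    -- under P, T has hazard rate μ
    (hTlaw : ∀ t : ℝ, P {ω | t < T ω}
      = ENNReal.ofReal (Real.exp (-(∫ r in (0:ℝ)..t, μ r))))
    (v : ℝ → ℝ) (hv : ∀ t, v t = Real.exp (-(∫ r in (0:ℝ)..t, δ r)))
    -- discounted surplus Θ̃(t) = -∫₀ᵗ v(r) R(r) dM(r), written out pathwise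
    (Θ : ℝ → Ω → ℝ)
    (hΘ : ∀ t ω, Θ t ω =
      -((if 0 < T ω ∧ T ω ≤ t then v (T ω) * R (T ω) else 0)
          - ∫ r in (0:ℝ)..t, (if r < T ω then v r * R r * μ r else 0))) :
    ∀ s t u w : ℝ, 0 ≤ s → s ≤ t → t ≤ u → u ≤ w →
      (∫ ω, (Θ t ω - Θ s ω) * (Θ w ω - Θ u ω) ∂P) = 0 := by
  intro s t u w hs hst htu huw
  have h0u : 0 ≤ u := hs.trans (hst.trans htu)
  obtain ⟨C, hRC⟩ := hRb
  obtain rfl : v = decayFactor δ := funext hv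
  set f := fun r => decayFactor δ r * R r
  have hf : Measurable f := (continuous_decayFactor hδ).measurable.mul hR
  obtain ⟨B, hfB⟩ := exists_norm_mul_le_on_Icc (continuous_decayFactor hδ) hRC 0 w
  have hfμ : IntervalIntegrable (fun r => f r * μ r) volume 0 w :=
    (intervalIntegrable_iff_integrableOn_Icc_of_le (h0u.trans huw)).2
      (integrableOn_Icc_mul_of_norm_le hf hfB hμ)
  have hΘ' : ∀ x ω, Θ x ω = -compensatedIncrement T f μ 0 x ω := fun x ω => by
    simp [hΘ, compensatedIncrement, indicator_apply, f]
  have hincr : ∀ a b, 0 ≤ a → a ≤ b → b ≤ w → ∀ ω,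
      Θ b ω - Θ a ω = -compensatedIncrement T f μ a b ω := fun a b ha hab hbw ω => by
    rw [hΘ', hΘ', ← compensatedIncrement_add (hfμ.mono_set
      (uIcc_subset_uIcc_left (Icc_subset_uIcc ⟨ha.trans hab, hbw⟩))) ha hab]
    ring
  calc ∫ ω, (Θ t ω - Θ s ω) * (Θ w ω - Θ u ω) ∂P
      = ∫ ω, compensatedIncrement T f μ s t ω * compensatedIncrement T f μ u w ω ∂P := by
        congr 1 with ω
        rw [hincr s t hs hst (htu.trans huw), hincr u w h0u huw le_rfl]
        ring
    _ = -(∫ r in s..t, f r * μ r) * ∫ ω, compensatedIncrement T f μ u w ω ∂P := by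
        simp_rw [compensatedIncrement_mul_of_le hst htu huw, integral_const_mul]
    _ = 0 := by
        rw [integral_compensatedIncrement hT hf (fun r hr => hfB r ⟨h0u.trans hr.1, hr.2⟩) hμ
          hTlaw huw, mul_zero]

/-- Hattendorff's theorem in the single-life setting: discounted surpluses over
non-overlapping time intervals are uncorrelated. -/
theorem hattendorff_uncorrelated_increments
    {Ω : Type*} [m0 : MeasurableSpace Ω] (P : Measure Ω) [IsProbabilityMeasure P]
    (T : Ω → ℝ) (hT : Measurable T) (hTnn : ∀ ω, 0 ≤ T ω)
    (δ μ R : ℝ → ℝ)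
    (hδ : Continuous δ) (hμ : Continuous μ)
    (hR : Measurable R) (hRb : ∃ C, ∀ r, |R r| ≤ C)
    -- under P, T has hazard rate μ
    (hTlaw : ∀ t : ℝ, P {ω | t < T ω}
      = ENNReal.ofReal (Real.exp (-(∫ r in (0:ℝ)..t, μ r))))
    (v : ℝ → ℝ) (hv : ∀ t, v t = Real.exp (-(∫ r in (0:ℝ)..t, δ r)))
    -- discounted surplus Θ̃(t) = -∫₀ᵗ v(r) R(r) dM(r), written out pathwise
    (Θ : ℝ → Ω → ℝ)
    (hΘ : ∀ t ω, Θ t ω =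
      -((if 0 < T ω ∧ T ω ≤ t then v (T ω) * R (T ω) else 0)
          - ∫ r in (0:ℝ)..t, (if r < T ω then v r * R r * μ r else 0))) :
    ∀ s t u w : ℝ, 0 ≤ s → s ≤ t → t ≤ u → u ≤ w →
      (∫ ω, (Θ t ω - Θ s ω) * (Θ w ω - Θ u ω) ∂P) = 0 :=
  hattendorff_uncorrelated_increments_general (m0 := m0) P T hT δ μ R hδ hμ hR hRb hTlaw v hv Θ hΘ
end

section
/- Let (δᴸ,μᴸ) be a first-order and (δᴹ,μᴹ) a second-order technical basis, Vᴸ the Thiele solution on the first-order basis with Vᴸ(n)=S̄, and suppose T has hazard μᴹ. Define the stochastic surplus Θ(t) = ∫₀ᵗ (vᴹ(r)/vᴹ(t)) dB(r) - 1_{T>t}Vᴸ(t), the systematic component c(t) = (δᴹ(t)-δᴸ(t))Vᴸ(t) - (μᴹ(t)-μᴸ(t))(S(t)-Vᴸ(t)), and Mᴹ(t) = N(t)-∫₀ᵗ1_{T>r}μᴹ(r)dr. Then dΘ(t) = δᴹ(t)Θ(t)dt + 1_{T>t}c(t)dt - (S(t)-Vᴸ(t))dMᴹ(t). -/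
/-!
Fix an outcome with lifetime `τ`. Before death the surplus is the active surplus
`F = (∫₀ᵗ vᴹ Prem) / vᴹ - Vᴸ`; differentiating it and substituting Thiele's equation for `Vᴸ`
shows that `F` solves Thiele's equation on the experience basis, `F' = δᴹ F + c + (S - Vᴸ) μᴹ`.
After death the surplus is `K / vᴹ` for a constant `K`, so it only accrues interest at rate `δᴹ`.
At death it jumps by `Vᴸ(τ) - S(τ)`. Integrating the two linear equations and adding the jump
gives the integrated dynamics, the compensator of `N` being `∫₀ᵗ 1_{r<τ} μᴹ(r) dr`.
If `τ ≤ 0` no contract is in force and every term vanishes.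
-/

open MeasureTheory Set intervalIntegral

section LinearODE

variable {θ f g δ h : ℝ → ℝ} {a b τ : ℝ}

theorem sub_eq_integral_of_hasDerivAt_linear (hab : a ≤ b)
    (hf : ∀ x ∈ Icc a b, HasDerivAt f (δ x * f x + h x) x) (hδ : ContinuousOn δ (Icc a b))
    (hh : IntervalIntegrable h volume a b) :
    f b - f a = (∫ x in a..b, δ x * f x) + ∫ x in a..b, h x := by
  have hfc : ContinuousOn f (Icc a b) := fun x hx => (hf x hx).continuousAt.continuousWithinAt
  have hδf : IntervalIntegrable (fun x => δ x * f x) volume a b :=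
    (hδ.mul hfc).intervalIntegrable_of_Icc hab
  rw [← integral_add hδf hh, integral_eq_sub_of_hasDerivAt _ (hδf.add hh)]
  rwa [uIcc_of_le hab]

theorem sub_eq_integral_add_jump (haτ : a < τ) (hτb : τ ≤ b)
    (hθf : EqOn θ f (Ico a τ)) (hθg : EqOn θ g (Icc τ b))
    (hf : ∀ x ∈ Icc a τ, HasDerivAt f (δ x * f x + h x) x)
    (hg : ∀ x ∈ Icc τ b, HasDerivAt g (δ x * g x) x)
    (hδ : ContinuousOn δ (Icc a b)) (hh : IntervalIntegrable h volume a τ) :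
    θ b - θ a = (∫ x in a..b, δ x * θ x) + (∫ x in a..τ, h x) + (g τ - f τ) := by
  have hδf : IntervalIntegrable (fun x => δ x * f x) volume a τ :=
    ((hδ.mono (Icc_subset_Icc_right hτb)).mul fun x hx =>
      (hf x hx).continuousAt.continuousWithinAt).intervalIntegrable_of_Icc haτ.le
  have hδg : IntervalIntegrable (fun x => δ x * g x) volume τ b :=
    ((hδ.mono (Icc_subset_Icc_left haτ.le)).mul fun x hx =>
      (hg x hx).continuousAt.continuousWithinAt).intervalIntegrable_of_Icc hτb
  have hfθ : EqOn (fun x => δ x * f x) (fun x => δ x * θ x) (uIoo a τ) := fun x hx => by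
    rw [uIoo_of_le haτ.le] at hx
    simp only [hθf (Ioo_subset_Ico_self hx)]
  have hgθ : EqOn (fun x => δ x * g x) (fun x => δ x * θ x) (uIcc τ b) := fun x hx => by
    rw [uIcc_of_le hτb] at hx
    simp only [hθg hx]
  have hF := sub_eq_integral_of_hasDerivAt_linear haτ.le hf
    (hδ.mono (Icc_subset_Icc_right hτb)) hh
  have hG := sub_eq_integral_of_hasDerivAt_linear (h := fun _ => 0) hτb (by simpa using hg)
    (hδ.mono (Icc_subset_Icc_left haτ.le)) intervalIntegrable_const
  rw [← integral_add_adjacent_intervals (hδf.congr_uIoo hfθ)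
      (hδg.congr (hgθ.mono uIoc_subset_uIcc)),
    ← integral_congr_uIoo hfθ, ← integral_congr hgθ, hθf ⟨le_rfl, haτ⟩, hθg ⟨hτb, le_rfl⟩]
  simp only [intervalIntegral.integral_zero, add_zero] at hG
  linarith

theorem integral_ite_lt_of_mem_Icc (F : ℝ → ℝ) (hτ : τ ∈ Icc a b) :
    ∫ r in a..b, (if r < τ then F r else 0) = ∫ r in a..τ, F r := by
  rw [← integral_indicator hτ]
  refine integral_congr_ae ?_
  filter_upwards [volume.ae_ne τ] with r hr _
  simp only [indicator_apply, mem_ofPred_eq, le_iff_lt_or_eq, hr, or_false]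

end LinearODE

noncomputable def discountFactor (δ : ℝ → ℝ) (t : ℝ) : ℝ := Real.exp (-(∫ r in (0:ℝ)..t, δ r))

noncomputable def activeSurplus (v P V : ℝ → ℝ) (t : ℝ) : ℝ :=
  (∫ r in (0:ℝ)..t, v r * P r) / v t - V t

/-- The retrospective surplus `Θ(t)` for an insured with lifetime `τ`, discounted by `v`. -/
noncomputable def stochasticSurplus (v P S V : ℝ → ℝ) (τ t : ℝ) : ℝ :=
  (∫ r in (0:ℝ)..t, (v r / v t) * (if r < τ then P r else 0))
    - (if 0 < τ ∧ τ ≤ t then (v τ / v t) * S τ else 0)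
    - (if t < τ then V t else 0)

section Surplus

variable {δ δL μL μ P S V c v : ℝ → ℝ} {τ t : ℝ}

theorem discountFactor_pos (δ : ℝ → ℝ) (t : ℝ) : 0 < discountFactor δ t := Real.exp_pos _

theorem hasDerivAt_discountFactor (hδ : Continuous δ) (t : ℝ) :
    HasDerivAt (discountFactor δ) (-δ t * discountFactor δ t) t :=
  ((hδ.integral_hasStrictDerivAt 0 t).hasDerivAt.neg.exp).congr_deriv (mul_comm _ _)

theorem continuous_discountFactor (hδ : Continuous δ) : Continuous (discountFactor δ) :=
  continuous_iff_continuousAt.2 fun t => (hasDerivAt_discountFactor hδ t).continuousAt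

theorem hasDerivAt_activeSurplus {s : ℝ} (hδ : Continuous δ) (hP : Continuous P)
    (hV : HasDerivAt V (δL s * V s + P s - μL s * (S s - V s)) s) :
    HasDerivAt (activeSurplus (discountFactor δ) P V)
      (δ s * activeSurplus (discountFactor δ) P V s
        + ((δ s - δL s) * V s + μL s * (S s - V s))) s := by
  have hG : HasDerivAt (fun t => ∫ r in (0:ℝ)..t, discountFactor δ r * P r)
      (discountFactor δ s * P s) s :=
    (((continuous_discountFactor hδ).mul hP).integral_hasStrictDerivAt 0 s).hasDerivAt
  refine ((hG.div (hasDerivAt_discountFactor hδ s) (discountFactor_pos δ s).ne').sub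
    hV).congr_deriv ?_
  rw [activeSurplus]
  field_simp [(discountFactor_pos δ s).ne']
  ring

theorem hasDerivAt_const_div_discountFactor (hδ : Continuous δ) (K t : ℝ) :
    HasDerivAt (fun u => K / discountFactor δ u) (δ t * (K / discountFactor δ t)) t := by
  refine ((hasDerivAt_const t K).div (hasDerivAt_discountFactor hδ t)
    (discountFactor_pos δ t).ne').congr_deriv ?_
  field_simp [(discountFactor_pos δ t).ne']
  ring

theorem stochasticSurplus_of_nonpos (hτ : τ ≤ 0) (ht : 0 ≤ t) :
    stochasticSurplus v P S V τ t = 0 := by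
  have hpaid : ∫ r in (0:ℝ)..t, v r / v t * (if r < τ then P r else 0) = 0 := by
    refine integral_zero_ae (ae_of_all _ fun r hr => ?_)
    rw [uIoc_of_le ht] at hr
    rw [if_neg (hτ.trans hr.1.le).not_gt, mul_zero]
  rw [stochasticSurplus, hpaid, if_neg fun h => h.1.not_ge hτ, if_neg (hτ.trans ht).not_gt]
  ring

theorem stochasticSurplus_of_lt (ht : 0 ≤ t) (htτ : t < τ) :
    stochasticSurplus v P S V τ t = activeSurplus v P V t := by
  have hpaid : ∫ r in (0:ℝ)..t, v r / v t * (if r < τ then P r else 0)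
      = (∫ r in (0:ℝ)..t, v r * P r) / v t := by
    rw [← intervalIntegral.integral_div]
    refine integral_congr fun r hr => ?_
    rw [uIcc_of_le ht] at hr
    simp only [if_pos (hr.2.trans_lt htτ), div_mul_eq_mul_div]
  rw [stochasticSurplus, hpaid, if_neg fun h => h.2.not_gt htτ, if_pos htτ, activeSurplus,
    sub_zero]

theorem stochasticSurplus_of_le (hτ : 0 < τ) (hτt : τ ≤ t) :
    stochasticSurplus v P S V τ t = ((∫ r in (0:ℝ)..τ, v r * P r) - v τ * S τ) / v t := by
  have hpaid : ∫ r in (0:ℝ)..t, v r / v t * (if r < τ then P r else 0)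
      = (∫ r in (0:ℝ)..τ, v r * P r) / v t := by
    simp_rw [mul_ite, mul_zero, div_mul_eq_mul_div]
    rw [integral_ite_lt_of_mem_Icc _ ⟨hτ.le, hτt⟩, intervalIntegral.integral_div]
  rw [stochasticSurplus, hpaid, if_pos ⟨hτ, hτt⟩, if_neg hτt.not_gt]
  ring

theorem stochasticSurplus_sub_of_nonpos (hτ : τ ≤ 0) (ht : 0 ≤ t) :
    stochasticSurplus v P S V τ t - stochasticSurplus v P S V τ 0 =
      (∫ r in (0:ℝ)..t, δ r * stochasticSurplus v P S V τ r)
        + (∫ r in (0:ℝ)..t, (if r < τ then c r else 0))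
        - ((if 0 < τ ∧ τ ≤ t then S τ - V τ else 0)
            - ∫ r in (0:ℝ)..t, (if r < τ then (S r - V r) * μ r else 0)) := by
  have hθ : ∀ r ∈ uIcc 0 t, δ r * stochasticSurplus v P S V τ r = 0 := fun r hr => by
    rw [uIcc_of_le ht] at hr
    rw [stochasticSurplus_of_nonpos hτ hr.1, mul_zero]
  have hdead : ∀ F : ℝ → ℝ, ∫ r in (0:ℝ)..t, (if r < τ then F r else 0) = 0 := fun F =>
    integral_zero_ae (ae_of_all _ fun r hr => if_neg (hτ.trans (uIoc_of_le ht ▸ hr).1.le).not_gt)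
  rw [stochasticSurplus_of_nonpos hτ ht, stochasticSurplus_of_nonpos hτ le_rfl,
    integral_congr hθ, hdead, hdead, if_neg fun h => h.1.not_ge hτ]
  simp

theorem stochasticSurplus_sub_of_lt (hδ : ContinuousOn δ (Icc 0 t))
    (hF : ∀ s ∈ Icc 0 t, HasDerivAt (activeSurplus v P V)
      (δ s * activeSurplus v P V s + (c s + (S s - V s) * μ s)) s)
    (hc : IntervalIntegrable c volume 0 t)
    (hSV : IntervalIntegrable (fun r => (S r - V r) * μ r) volume 0 t)
    (ht : 0 ≤ t) (htτ : t < τ) :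
    stochasticSurplus v P S V τ t - stochasticSurplus v P S V τ 0 =
      (∫ r in (0:ℝ)..t, δ r * stochasticSurplus v P S V τ r)
        + (∫ r in (0:ℝ)..t, (if r < τ then c r else 0))
        - ((if 0 < τ ∧ τ ≤ t then S τ - V τ else 0)
            - ∫ r in (0:ℝ)..t, (if r < τ then (S r - V r) * μ r else 0)) := by
  have halive : ∀ r ∈ uIcc 0 t, r < τ := fun r hr => (uIcc_of_le ht ▸ hr).2.trans_lt htτ
  have hθ : EqOn (fun r => δ r * stochasticSurplus v P S V τ r)
      (fun r => δ r * activeSurplus v P V r) (uIcc 0 t) := fun r hr => by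
    simp only [stochasticSurplus_of_lt (uIcc_of_le ht ▸ hr).1 (halive r hr)]
  have hFTC := sub_eq_integral_of_hasDerivAt_linear ht hF hδ (hc.add hSV)
  rw [integral_add hc hSV] at hFTC
  rw [stochasticSurplus_of_lt ht htτ, stochasticSurplus_of_lt le_rfl (ht.trans_lt htτ),
    integral_congr hθ, integral_congr fun r hr => if_pos (halive r hr),
    integral_congr fun r hr => if_pos (halive r hr), if_neg fun h => h.2.not_gt htτ, hFTC]
  ring

theorem stochasticSurplus_sub_of_le (hδ : Continuous δ)
    (hF : ∀ s ∈ Icc 0 t, HasDerivAt (activeSurplus (discountFactor δ) P V)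
      (δ s * activeSurplus (discountFactor δ) P V s + (c s + (S s - V s) * μ s)) s)
    (hc : IntervalIntegrable c volume 0 t)
    (hSV : IntervalIntegrable (fun r => (S r - V r) * μ r) volume 0 t)
    (hτ : 0 < τ) (hτt : τ ≤ t) :
    stochasticSurplus (discountFactor δ) P S V τ t
        - stochasticSurplus (discountFactor δ) P S V τ 0 =
      (∫ r in (0:ℝ)..t, δ r * stochasticSurplus (discountFactor δ) P S V τ r)
        + (∫ r in (0:ℝ)..t, (if r < τ then c r else 0))
        - ((if 0 < τ ∧ τ ≤ t then S τ - V τ else 0)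
            - ∫ r in (0:ℝ)..t, (if r < τ then (S r - V r) * μ r else 0)) := by
  set v := discountFactor δ
  set K := (∫ r in (0:ℝ)..τ, v r * P r) - v τ * S τ
  have hsub : uIcc 0 τ ⊆ uIcc 0 t :=
    uIcc_subset_uIcc left_mem_uIcc (uIcc_of_le (hτ.le.trans hτt) ▸ ⟨hτ.le, hτt⟩)
  have hjump := sub_eq_integral_add_jump (g := fun u => K / v u) hτ hτt
    (fun r hr => stochasticSurplus_of_lt hr.1 hr.2) (fun r hr => stochasticSurplus_of_le hτ hr.1)
    (fun s hs => hF s ⟨hs.1, hs.2.trans hτt⟩)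
    (fun s _ => hasDerivAt_const_div_discountFactor hδ K s) hδ.continuousOn
    ((hc.mono_set hsub).add (hSV.mono_set hsub))
  have hgap : K / v τ - activeSurplus v P V τ = V τ - S τ := by
    have hv : v τ ≠ 0 := (discountFactor_pos δ τ).ne'
    simp only [K, activeSurplus]
    field_simp
    ring
  rw [hgap, integral_add (hc.mono_set hsub) (hSV.mono_set hsub)] at hjump
  rw [integral_ite_lt_of_mem_Icc _ ⟨hτ.le, hτt⟩,
    integral_ite_lt_of_mem_Icc (fun r => (S r - V r) * μ r) ⟨hτ.le, hτt⟩, if_pos ⟨hτ, hτt⟩,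
    hjump]
  ring

end Surplus

theorem two_basis_surplus_dynamics_general
    {Ω : Type*} (n : ℝ)
    (T : Ω → ℝ)
    (δL μL δM μM Prem S VL c : ℝ → ℝ)
    (hδL : Continuous δL) (hμL : Continuous μL)
    (hδM : Continuous δM) (hμM : Continuous μM)
    (hPrem : Continuous Prem) (hS : Continuous S)
    (vM : ℝ → ℝ) (hvM : ∀ t, vM t = Real.exp (-(∫ r in (0:ℝ)..t, δM r)))
    -- Vᴸ solves Thiele's equation on the first-order basis with Vᴸ(n) = S̄
    (hVL : ∀ t ∈ Icc (0:ℝ) n,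
      HasDerivAt VL (δL t * VL t + Prem t - μL t * (S t - VL t)) t)
    -- systematic component of surplus
    (hc : ∀ t, c t = (δM t - δL t) * VL t - (μM t - μL t) * (S t - VL t))
    -- stochastic surplus Θ(t) = ∫₀ᵗ (vᴹ r / vᴹ t) dB(r) - 1_{T>t} Vᴸ(t)
    (Θ : ℝ → Ω → ℝ)
    (hΘ : ∀ t ω, Θ t ω =
      (∫ r in (0:ℝ)..t, (vM r / vM t) * (if r < T ω then Prem r else 0))
      - (if 0 < T ω ∧ T ω ≤ t then (vM (T ω) / vM t) * S (T ω) else 0)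
      - (if t < T ω then VL t else 0)) :
    ∀ ω, ∀ t ∈ Icc (0:ℝ) n,
      Θ t ω - Θ 0 ω =
        (∫ r in (0:ℝ)..t, δM r * Θ r ω)
        + (∫ r in (0:ℝ)..t, (if r < T ω then c r else 0))
        - ((if 0 < T ω ∧ T ω ≤ t then S (T ω) - VL (T ω) else 0)
            - ∫ r in (0:ℝ)..t, (if r < T ω then (S r - VL r) * μM r else 0)) := by
  intro ω t ⟨ht0, htn⟩
  obtain rfl : vM = discountFactor δM := funext hvM
  have hVLc : ContinuousOn VL (Icc 0 t) := fun s hs =>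
    (hVL s ⟨hs.1, hs.2.trans htn⟩).continuousAt.continuousWithinAt
  have hF : ∀ s ∈ Icc 0 t, HasDerivAt (activeSurplus (discountFactor δM) Prem VL)
      (δM s * activeSurplus (discountFactor δM) Prem VL s + (c s + (S s - VL s) * μM s)) s :=
    fun s hs => (hasDerivAt_activeSurplus hδM hPrem (hVL s ⟨hs.1, hs.2.trans htn⟩)).congr_deriv
      (by rw [hc]; ring)
  have hcI : IntervalIntegrable c volume 0 t :=
    ((((hδM.continuousOn.sub hδL.continuousOn).mul hVLc).sub
      ((hμM.continuousOn.sub hμL.continuousOn).mul (hS.continuousOn.sub hVLc))).congr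
        fun r _ => hc r).intervalIntegrable_of_Icc ht0
  have hSVI : IntervalIntegrable (fun r => (S r - VL r) * μM r) volume 0 t :=
    ((hS.continuousOn.sub hVLc).mul hμM.continuousOn).intervalIntegrable_of_Icc ht0
  have hθ : ∀ r, Θ r ω = stochasticSurplus (discountFactor δM) Prem S VL (T ω) r :=
    fun r => hΘ r ω
  simp only [hθ]
  rcases le_or_gt (T ω) 0 with hτ | hτ
  · exact stochasticSurplus_sub_of_nonpos hτ ht0
  rcases lt_or_ge t (T ω) with htτ | hτt
  · exact stochasticSurplus_sub_of_lt hδM.continuousOn hF hcI hSVI ht0 htτ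
  · exact stochasticSurplus_sub_of_le hδM hF hcI hSVI hτ hτt

/-- Surplus dynamics with two technical bases (Scandinavian-style regulation), in
integrated pathwise form: `Θ(t) - Θ(0) = ∫₀ᵗ δᴹ Θ dr + ∫₀ᵗ 1_{T>r} c dr - ∫₀ᵗ (S-Vᴸ) dMᴹ`,
where `c` is the systematic component and `Mᴹ` the compensated counting process
under the experience basis. -/
theorem two_basis_surplus_dynamics
    {Ω : Type*} (n Sbar : ℝ) (hn : 0 < n)
    (T : Ω → ℝ) (hTnn : ∀ ω, 0 ≤ T ω)
    (δL μL δM μM Prem S VL c : ℝ → ℝ)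
    (hδL : Continuous δL) (hμL : Continuous μL)
    (hδM : Continuous δM) (hμM : Continuous μM)
    (hPrem : Continuous Prem) (hS : Continuous S)
    (vM : ℝ → ℝ) (hvM : ∀ t, vM t = Real.exp (-(∫ r in (0:ℝ)..t, δM r)))
    -- Vᴸ solves Thiele's equation on the first-order basis with Vᴸ(n) = S̄
    (hVL : ∀ t ∈ Icc (0:ℝ) n,
      HasDerivAt VL (δL t * VL t + Prem t - μL t * (S t - VL t)) t)
    (hVLn : VL n = Sbar)
    -- systematic component of surplus
    (hc : ∀ t, c t = (δM t - δL t) * VL t - (μM t - μL t) * (S t - VL t))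
    -- stochastic surplus Θ(t) = ∫₀ᵗ (vᴹ r / vᴹ t) dB(r) - 1_{T>t} Vᴸ(t)
    (Θ : ℝ → Ω → ℝ)
    (hΘ : ∀ t ω, Θ t ω =
      (∫ r in (0:ℝ)..t, (vM r / vM t) * (if r < T ω then Prem r else 0))
      - (if 0 < T ω ∧ T ω ≤ t then (vM (T ω) / vM t) * S (T ω) else 0)
      - (if t < T ω then VL t else 0)) :
    ∀ ω, ∀ t ∈ Icc (0:ℝ) n,
      Θ t ω - Θ 0 ω =
        (∫ r in (0:ℝ)..t, δM r * Θ r ω)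
        + (∫ r in (0:ℝ)..t, (if r < T ω then c r else 0))
        - ((if 0 < T ω ∧ T ω ≤ t then S (T ω) - VL (T ω) else 0)
            - ∫ r in (0:ℝ)..t, (if r < T ω then (S r - VL r) * μM r else 0)) :=
  two_basis_surplus_dynamics_general n T δL μL δM μM Prem S VL c hδL hμL hδM hμM hPrem hS vM hvM hVL
    hc Θ hΘ
end

section
/- In the two-basis model, the expected discounted surplus satisfies Θ̃ᴸᴹ(t) := E_M[vᴹ(t)Θ(t)] = -Vᴸ(0) + ∫₀ᵗ φᴹ(r) c(r) dr, where φᴹ(r) = exp(-∫₀ʳ(δᴹ+μᴹ)) and c(r) = (δᴹ(r)-δᴸ(r))Vᴸ(r) - (μᴹ(r)-μᴸ(r))(S(r)-Vᴸ(r)). -/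
open MeasureTheory Set

/-!
The law of `T` has density `μᴹ pᴹ`, so by Fubini the expected discounted premiums, death
benefits and reserve at `t` are `∫₀ᵗ φᴹ Prem`, `∫₀ᵗ φᴹ μᴹ S` and `φᴹ(t) Vᴸ(t)`. Thiele's equation
for `Vᴸ` gives `(φᴹ Vᴸ)' = φᴹ (Prem - μᴹ S - c)`, and integrating over `[0, t]` turns the
difference of the three terms into `-Vᴸ(0) + ∫₀ᵗ φᴹ c`.
-/

/-- `decay δᴹ`, `decay μᴹ` and `decay (δᴹ + μᴹ)` are the paper's `vᴹ`, `pᴹ` and `φᴹ`. -/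
noncomputable def decay (f : ℝ → ℝ) (t : ℝ) : ℝ := Real.exp (-∫ r in (0:ℝ)..t, f r)

section Decay

variable {f g : ℝ → ℝ}

lemma decay_pos (f : ℝ → ℝ) (t : ℝ) : 0 < decay f t := Real.exp_pos _

@[simp] lemma decay_zero (f : ℝ → ℝ) : decay f 0 = 1 := by simp [decay]

lemma hasDerivAt_decay (hf : Continuous f) (x : ℝ) :
    HasDerivAt (decay f) (-(f x * decay f x)) x := by
  unfold decay
  simpa [mul_comm] using (intervalIntegral.integral_hasDerivAt_right (hf.intervalIntegrable 0 x)
    hf.stronglyMeasurable.stronglyMeasurableAtFilter hf.continuousAt).neg.exp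

lemma continuous_decay (hf : Continuous f) : Continuous (decay f) :=
  continuous_iff_continuousAt.2 fun x => (hasDerivAt_decay hf x).continuousAt

lemma decay_add (hf : Continuous f) (hg : Continuous g) (t : ℝ) :
    decay (f + g) t = decay f t * decay g t := by
  rw [decay, decay, decay, ← Real.exp_add, ← neg_add,
    ← intervalIntegral.integral_add (hf.intervalIntegrable _ _) (hg.intervalIntegrable _ _)]
  rfl

end Decay

section Tail

variable {ν : Measure ℝ} {p f : ℝ → ℝ}

lemma antitone_of_measure_Ioi (hν : ∀ r, ν (Ioi r) = ENNReal.ofReal (p r))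
    (hp_nonneg : ∀ r, 0 ≤ p r) : Antitone p := fun a b hab => by
  have := measure_mono (μ := ν) (Ioi_subset_Ioi hab)
  rwa [hν, hν, ENNReal.ofReal_le_ofReal_iff (hp_nonneg a)] at this

lemma nonneg_of_measure_Ioi (hν : ∀ r, ν (Ioi r) = ENNReal.ofReal (p r))
    (hp_nonneg : ∀ r, 0 ≤ p r) (hp : ∀ x, HasDerivAt p (-f x) x) (x : ℝ) : 0 ≤ f x :=
  neg_nonpos.1 <| (hp x).nonpos_of_antitone (antitone_of_measure_Ioi hν hp_nonneg)

lemma measure_Ioc_eq_of_measure_Ioi (hν : ∀ r, ν (Ioi r) = ENNReal.ofReal (p r))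
    (hp_nonneg : ∀ r, 0 ≤ p r) {a b : ℝ} (hab : a ≤ b) :
    ν (Ioc a b) = ENNReal.ofReal (p a - p b) := by
  rw [← Ioi_sdiff_Ioi, measure_sdiff (Ioi_subset_Ioi hab) measurableSet_Ioi.nullMeasurableSet
    (by rw [hν]; exact ENNReal.ofReal_ne_top), hν, hν, ENNReal.ofReal_sub _ (hp_nonneg b)]

theorem eq_withDensity_of_measure_Ioi (hν : ∀ r, ν (Ioi r) = ENNReal.ofReal (p r))
    (hp_nonneg : ∀ r, 0 ≤ p r) (hp : ∀ x, HasDerivAt p (-f x) x) (hf : Continuous f) :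
    ν = volume.withDensity fun x => ENNReal.ofReal (f x) := by
  refine Measure.ext_of_Ioc' _ _ (fun a b hab => ?_) (fun a b hab => ?_)
  · rw [measure_Ioc_eq_of_measure_Ioi hν hp_nonneg hab.le]
    exact ENNReal.ofReal_ne_top
  · have hftc : ∫ x in a..b, f x = p a - p b := by
      rw [intervalIntegral.integral_eq_sub_of_hasDerivAt (f := -p)
        (fun x _ => by simpa using (hp x).neg) (hf.intervalIntegrable a b)]
      exact neg_sub_neg _ _
    rw [measure_Ioc_eq_of_measure_Ioi hν hp_nonneg hab.le, withDensity_apply _ measurableSet_Ioc,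
      ← ofReal_integral_eq_lintegral_ofReal hf.integrableOn_Ioc
        (Filter.Eventually.of_forall (nonneg_of_measure_Ioi hν hp_nonneg hp)),
      ← intervalIntegral.integral_of_le hab.le, hftc]

theorem setIntegral_eq_of_measure_Ioi (hν : ∀ r, ν (Ioi r) = ENNReal.ofReal (p r))
    (hp_nonneg : ∀ r, 0 ≤ p r) (hp : ∀ x, HasDerivAt p (-f x) x) (hf : Continuous f)
    (g : ℝ → ℝ) {s : Set ℝ} (hs : MeasurableSet s) :
    ∫ x in s, g x ∂ν = ∫ x in s, f x * g x := by
  rw [eq_withDensity_of_measure_Ioi hν hp_nonneg hp hf]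
  refine (setIntegral_withDensity_eq_setIntegral_smul
    (f := fun x => (f x).toNNReal) hf.measurable.real_toNNReal g hs).trans ?_
  simp only [NNReal.smul_def, Real.coe_toNNReal _ (nonneg_of_measure_Ioi hν hp_nonneg hp _),
    smul_eq_mul]

end Tail

lemma mul_surplus_eq {v b S : ℝ → ℝ} {t : ℝ} (ht : 0 ≤ t) (hvt : v t ≠ 0) (V τ : ℝ) :
    v t * ((∫ r in (0:ℝ)..t, v r / v t * (if r < τ then b r else 0))
        - (if 0 < τ ∧ τ ≤ t then v τ / v t * S τ else 0) - (if t < τ then V else 0))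
      = (∫ r in Ioc 0 t, if r < τ then v r * b r else 0)
        - (Ioc 0 t).indicator (fun x => v x * S x) τ
        - {x | t < x}.indicator (fun _ => v t * V) τ := by
  rw [mul_sub, mul_sub, ← intervalIntegral.integral_const_mul, intervalIntegral.integral_of_le ht]
  simp only [indicator_apply, mem_Ioc, mem_ofPred_eq, mul_ite, mul_zero]
  congr 2
  · refine setIntegral_congr_fun measurableSet_Ioc fun r _ => ?_
    split_ifs <;> field_simp
  · split_ifs <;> field_simp

section RandomTime

variable {Ω : Type*} [MeasurableSpace Ω] {P : Measure Ω} {T : Ω → ℝ}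

lemma integrable_uncurry_ite_lt [IsFiniteMeasure P] (hT : Measurable T) {μ : Measure ℝ}
    {a : ℝ → ℝ} (ha : Integrable a μ) :
    Integrable (Function.uncurry fun r ω => if r < T ω then a r else 0) (μ.prod P) := by
  have : (Function.uncurry fun r ω => if r < T ω then a r else 0)
      = {z : ℝ × Ω | z.1 < T z.2}.indicator fun z => a z.1 := by
    ext z; simp [indicator_apply, Function.uncurry]
  rw [this]
  exact (ha.comp_fst P).indicator (measurableSet_lt measurable_fst (hT.comp measurable_snd))

lemma integral_setIntegral_ite_lt [IsFiniteMeasure P] (hT : Measurable T) {a : ℝ → ℝ}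
    {s : Set ℝ} (ha : IntegrableOn a s) :
    ∫ ω, (∫ r in s, if r < T ω then a r else 0) ∂P = ∫ r in s, a r * P.real {ω | r < T ω} := by
  rw [← integral_integral_swap (integrable_uncurry_ite_lt hT ha)]
  refine integral_congr_ae (Filter.Eventually.of_forall fun r => ?_)
  have : (fun ω => if r < T ω then a r else 0) = {ω | r < T ω}.indicator fun _ => a r := by
    ext ω; simp [indicator_apply]
  dsimp only
  rw [this]
  exact (integral_indicator_const _ (hT measurableSet_Ioi)).trans (mul_comm _ _)

variable {μ : ℝ → ℝ}

theorem setIntegral_map_eq_of_decay (hT : Measurable T) (hμ : Continuous μ)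
    (hTlaw : ∀ t, P {ω | t < T ω} = ENNReal.ofReal (decay μ t)) (g : ℝ → ℝ) {s : Set ℝ}
    (hs : MeasurableSet s) :
    ∫ x in s, g x ∂P.map T = ∫ x in s, μ x * decay μ x * g x :=
  setIntegral_eq_of_measure_Ioi
    (fun r => by rw [Measure.map_apply hT measurableSet_Ioi]; exact hTlaw r)
    (fun r => (decay_pos μ r).le) (hasDerivAt_decay hμ) (hμ.mul (continuous_decay hμ)) g hs

lemma measureReal_lt_eq_decay (hTlaw : ∀ t, P {ω | t < T ω} = ENNReal.ofReal (decay μ t))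
    (r : ℝ) : P.real {ω | r < T ω} = decay μ r := by
  rw [measureReal_def, hTlaw, ENNReal.toReal_ofReal (decay_pos μ r).le]

theorem integral_mul_surplus [IsFiniteMeasure P] (hT : Measurable T) (hμ : Continuous μ)
    (hTlaw : ∀ t, P {ω | t < T ω} = ENNReal.ofReal (decay μ t)) {v b S : ℝ → ℝ}
    (hv : Continuous v) (hb : Continuous b) (hS : Continuous S) {t : ℝ} (ht : 0 ≤ t)
    (hvt : v t ≠ 0) (V : ℝ) :
    ∫ ω, v t * ((∫ r in (0:ℝ)..t, v r / v t * (if r < T ω then b r else 0))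
        - (if 0 < T ω ∧ T ω ≤ t then v (T ω) / v t * S (T ω) else 0)
        - (if t < T ω then V else 0)) ∂P
      = (∫ r in (0:ℝ)..t, v r * decay μ r * b r)
        - (∫ r in (0:ℝ)..t, v r * decay μ r * (μ r * S r)) - v t * decay μ t * V := by
  simp only [mul_surplus_eq ht hvt]
  have hvb : IntegrableOn (fun r => v r * b r) (Ioc 0 t) := (hv.mul hb).integrableOn_Ioc
  have hvS : Integrable ((Ioc 0 t).indicator fun x => v x * S x) (P.map T) :=
    ((hv.mul hS).continuousOn.integrableOn_Icc.mono_set Ioc_subset_Icc_self).integrable_indicator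
      measurableSet_Ioc
  have hV : Integrable ({x | t < x}.indicator fun _ => v t * V) (P.map T) :=
    (integrable_const _).indicator measurableSet_Ioi
  have hA : Integrable (fun ω => ∫ r in Ioc 0 t, if r < T ω then v r * b r else 0) P :=
    (integrable_uncurry_ite_lt hT hvb).integral_prod_right
  have hB : Integrable (fun ω => (Ioc 0 t).indicator (fun x => v x * S x) (T ω)) P :=
    hvS.comp_measurable hT
  have hC : Integrable (fun ω => {x | t < x}.indicator (fun _ => v t * V) (T ω)) P :=
    hV.comp_measurable hT
  rw [integral_sub (by exact hA.sub hB) hC, integral_sub hA hB,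
    integral_setIntegral_ite_lt hT hvb, ← integral_map hT.aemeasurable hvS.aestronglyMeasurable,
    ← integral_map hT.aemeasurable hV.aestronglyMeasurable,
    integral_indicator measurableSet_Ioc,
    setIntegral_map_eq_of_decay hT hμ hTlaw _ measurableSet_Ioc,
    integral_indicator_const (s := {x | t < x}) _ measurableSet_Ioi,
    map_measureReal_apply hT (s := {x | t < x}) measurableSet_Ioi,
    preimage_ofPred_eq, smul_eq_mul, intervalIntegral.integral_of_le ht,
    intervalIntegral.integral_of_le ht]
  simp only [measureReal_lt_eq_decay hTlaw]
  congr 1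
  · congr 1 <;> exact setIntegral_congr_fun measurableSet_Ioc fun r _ => by ring
  · ring

end RandomTime

theorem integral_mul_systematic_eq {φ δL μL δM μM b S V : ℝ → ℝ} {t : ℝ} (ht : 0 ≤ t)
    (hφ : ∀ x, HasDerivAt φ (-((δM x + μM x) * φ x)) x) (hφ0 : φ 0 = 1)
    (hV : ∀ x ∈ Icc 0 t, HasDerivAt V (δL x * V x + b x - μL x * (S x - V x)) x)
    (hδL : Continuous δL) (hμL : Continuous μL) (hδM : Continuous δM) (hμM : Continuous μM)
    (hb : Continuous b) (hS : Continuous S) :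
    (∫ r in (0:ℝ)..t, φ r * b r) - (∫ r in (0:ℝ)..t, φ r * (μM r * S r)) - φ t * V t
      = -V 0 + ∫ r in (0:ℝ)..t, φ r * ((δM r - δL r) * V r - (μM r - μL r) * (S r - V r)) := by
  have hφc : Continuous φ := continuous_iff_continuousAt.2 fun x => (hφ x).continuousAt
  have hVc : ContinuousOn V (Icc 0 t) := fun x hx => (hV x hx).continuousAt.continuousWithinAt
  have hb' : IntervalIntegrable (fun r => φ r * b r) volume 0 t :=
    (hφc.mul hb).intervalIntegrable _ _
  have hS' : IntervalIntegrable (fun r => φ r * (μM r * S r)) volume 0 t :=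
    (hφc.mul (hμM.mul hS)).intervalIntegrable _ _
  have hc' : IntervalIntegrable
      (fun r => φ r * ((δM r - δL r) * V r - (μM r - μL r) * (S r - V r))) volume 0 t := by
    refine ContinuousOn.intervalIntegrable ?_
    rw [uIcc_of_le ht]
    exact hφc.continuousOn.mul (((hδM.sub hδL).continuousOn.mul hVc).sub
      ((hμM.sub hμL).continuousOn.mul (hS.continuousOn.sub hVc)))
  have hftc := intervalIntegral.integral_eq_sub_of_hasDerivAt (f := fun r => φ r * V r)
    (fun x hx => ((hφ x).mul (hV x (uIcc_of_le ht ▸ hx))).congr_deriv (by ring))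
    ((hb'.sub hS').sub hc')
  rw [intervalIntegral.integral_sub (hb'.sub hS') hc', intervalIntegral.integral_sub hb' hS',
    hφ0, one_mul] at hftc
  linarith

theorem two_basis_modeled_discounted_surplus_general
    {Ω : Type*} [m0 : MeasurableSpace Ω] (P : Measure Ω) [IsProbabilityMeasure P]
    (n : ℝ)
    (T : Ω → ℝ) (hT : Measurable T)
    (δL μL δM μM Prem S VL c : ℝ → ℝ)
    (hδL : Continuous δL) (hμL : Continuous μL)
    (hδM : Continuous δM) (hμM : Continuous μM)
    (hPrem : Continuous Prem) (hS : Continuous S)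
    -- under the experience measure, T has hazard rate μᴹ
    (hTlaw : ∀ t : ℝ, P {ω | t < T ω}
      = ENNReal.ofReal (Real.exp (-(∫ r in (0:ℝ)..t, μM r))))
    (vM φM : ℝ → ℝ)
    (hvM : ∀ t, vM t = Real.exp (-(∫ r in (0:ℝ)..t, δM r)))
    (hφM : ∀ t, φM t = Real.exp (-(∫ r in (0:ℝ)..t, (δM r + μM r))))
    -- Vᴸ solves Thiele's equation on the first-order basis with Vᴸ(n) = S̄
    (hVL : ∀ t ∈ Icc (0:ℝ) n,
      HasDerivAt VL (δL t * VL t + Prem t - μL t * (S t - VL t)) t)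
    -- systematic component of surplus
    (hc : ∀ t, c t = (δM t - δL t) * VL t - (μM t - μL t) * (S t - VL t))
    (Θ : ℝ → Ω → ℝ)
    (hΘ : ∀ t ω, Θ t ω =
      (∫ r in (0:ℝ)..t, (vM r / vM t) * (if r < T ω then Prem r else 0))
      - (if 0 < T ω ∧ T ω ≤ t then (vM (T ω) / vM t) * S (T ω) else 0)
      - (if t < T ω then VL t else 0)) :
    ∀ t ∈ Icc (0:ℝ) n,
      (∫ ω, vM t * Θ t ω ∂P) = -VL 0 + ∫ r in (0:ℝ)..t, φM r * c r := by
  intro t ⟨ht0, htn⟩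
  obtain rfl : vM = decay δM := funext hvM
  obtain rfl : φM = decay (δM + μM) := funext hφM
  simp only [hΘ, hc]
  rw [integral_mul_surplus hT hμM hTlaw (continuous_decay hδM) hPrem hS ht0 (decay_pos δM t).ne']
  simp only [← decay_add hδM hμM]
  exact integral_mul_systematic_eq ht0 (hasDerivAt_decay (hδM.add hμM)) (decay_zero _)
    (fun x hx => hVL x ⟨hx.1, hx.2.trans htn⟩) hδL hμL hδM hμM hPrem hS

/-- Two-basis model: the modeled discounted surplus equals the initial surplus
`-Vᴸ(0)` plus the integral of the discounted systematic component:
`E_M[vᴹ(t)Θ(t)] = -Vᴸ(0) + ∫₀ᵗ φᴹ(r) c(r) dr`. -/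
theorem two_basis_modeled_discounted_surplus
    {Ω : Type*} [m0 : MeasurableSpace Ω] (P : Measure Ω) [IsProbabilityMeasure P]
    (n Sbar : ℝ) (hn : 0 < n)
    (T : Ω → ℝ) (hT : Measurable T) (hTnn : ∀ ω, 0 ≤ T ω)
    (δL μL δM μM Prem S VL c : ℝ → ℝ)
    (hδL : Continuous δL) (hμL : Continuous μL)
    (hδM : Continuous δM) (hμM : Continuous μM)
    (hPrem : Continuous Prem) (hS : Continuous S)
    -- under the experience measure, T has hazard rate μᴹ
    (hTlaw : ∀ t : ℝ, P {ω | t < T ω}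
      = ENNReal.ofReal (Real.exp (-(∫ r in (0:ℝ)..t, μM r))))
    (vM φM : ℝ → ℝ)
    (hvM : ∀ t, vM t = Real.exp (-(∫ r in (0:ℝ)..t, δM r)))
    (hφM : ∀ t, φM t = Real.exp (-(∫ r in (0:ℝ)..t, (δM r + μM r))))
    -- Vᴸ solves Thiele's equation on the first-order basis with Vᴸ(n) = S̄
    (hVL : ∀ t ∈ Icc (0:ℝ) n,
      HasDerivAt VL (δL t * VL t + Prem t - μL t * (S t - VL t)) t)
    (hVLn : VL n = Sbar)
    -- systematic component of surplus
    (hc : ∀ t, c t = (δM t - δL t) * VL t - (μM t - μL t) * (S t - VL t))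
    (Θ : ℝ → Ω → ℝ)
    (hΘ : ∀ t ω, Θ t ω =
      (∫ r in (0:ℝ)..t, (vM r / vM t) * (if r < T ω then Prem r else 0))
      - (if 0 < T ω ∧ T ω ≤ t then (vM (T ω) / vM t) * S (T ω) else 0)
      - (if t < T ω then VL t else 0)) :
    ∀ t ∈ Icc (0:ℝ) n,
      (∫ ω, vM t * Θ t ω ∂P) = -VL 0 + ∫ r in (0:ℝ)..t, φM r * c r :=
  two_basis_modeled_discounted_surplus_general (m0 := m0) P n T hT δL μL δM μM Prem S VL c hδL hμL
    hδM hμM hPrem hS hTlaw vM φM hvM hφM hVL hc Θ hΘ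
end

section
/- Let πᴸ be the net premium rate on valuation basis (δᴸ,μᴸ), i.e. the premium rate for which the Thiele solution satisfies both g(0)=0 and g(n)=S̄. If Vᴸ is the Thiele solution with the actual contractual premium rate P and Vᴸ(n)=S̄, then Vᴸ(0) = -∫₀ⁿ φᴸ(r)(P(r) - πᴸ(r)) dr, where φᴸ(r)=exp(-∫₀ʳ(δᴸ+μᴸ)). -/
/-!
Both `Vᴸ` and `g` solve Thiele's equation on the same basis, so their difference `h = Vᴸ - g`
solves the linear equation `h' = (δᴸ + μᴸ) h + (P - πᴸ)`. The discount factor `φᴸ` is an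
integrating factor for it: `(φᴸ h)' = φᴸ (P - πᴸ)`. Integrating over `[0, n]`, where
`h(n) = S̄ - S̄ = 0`, `h(0) = Vᴸ(0)` and `φᴸ(0) = 1`, gives the formula.
-/

open Set Real

theorem hasDerivAt_sub_of_thiele {δ μ S V W : ℝ → ℝ} {p q t : ℝ}
    (hV : HasDerivAt V (δ t * V t + p - μ t * (S t - V t)) t)
    (hW : HasDerivAt W (δ t * W t + q - μ t * (S t - W t)) t) :
    HasDerivAt (fun s => V s - W s) ((δ t + μ t) * (V t - W t) + (p - q)) t :=
  (hV.sub hW).congr_deriv (by ring)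

theorem HasDerivAt.mul_of_integratingFactor {φ h k c : ℝ → ℝ} {t : ℝ}
    (hφ : HasDerivAt φ (-k t * φ t) t) (hh : HasDerivAt h (k t * h t + c t) t) :
    HasDerivAt (fun s => φ s * h s) (φ t * c t) t :=
  (hφ.mul hh).congr_deriv (by ring)

section Discount

variable {k : ℝ → ℝ} {a b : ℝ}

theorem continuousOn_exp_neg_integral (hab : a ≤ b) (hk : ContinuousOn k (Icc a b)) :
    ContinuousOn (fun t => exp (-∫ r in a..t, k r)) (Icc a b) := by
  have hprim := intervalIntegral.continuousOn_primitive_interval (a := a) (b := b)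
    (μ := MeasureTheory.volume) (by rw [uIcc_of_le hab]; exact hk.integrableOn_Icc)
  rw [uIcc_of_le hab] at hprim
  exact hprim.neg.rexp

theorem hasDerivAt_exp_neg_integral_s11 (hk : ContinuousOn k (Icc a b)) {t : ℝ} (ht : t ∈ Ioo a b) :
    HasDerivAt (fun s => exp (-∫ r in a..s, k r)) (-k t * exp (-∫ r in a..t, k r)) t := by
  have hint : IntervalIntegrable k MeasureTheory.volume a t :=
    (hk.mono (Icc_subset_Icc_right ht.2.le)).intervalIntegrable_of_Icc ht.1.le
  have hprim : HasDerivAt (fun s => ∫ r in a..s, k r) (k t) t :=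
    intervalIntegral.integral_hasDerivAt_right hint
      ((hk.mono Ioo_subset_Icc_self).stronglyMeasurableAtFilter isOpen_Ioo t ht)
      (hk.continuousAt (Icc_mem_nhds ht.1 ht.2))
  exact hprim.neg.exp.congr_deriv (by simp only [Pi.neg_apply]; ring)

theorem integral_discount_mul_eq_sub {c h : ℝ → ℝ} (hab : a ≤ b)
    (hk : ContinuousOn k (Icc a b)) (hc : ContinuousOn c (Icc a b))
    (hh : ContinuousOn h (Icc a b))
    (hderiv : ∀ t ∈ Ioo a b, HasDerivAt h (k t * h t + c t) t) :
    ∫ t in a..b, exp (-∫ r in a..t, k r) * c t = exp (-∫ r in a..b, k r) * h b - h a := by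
  have hdisc := continuousOn_exp_neg_integral hab hk
  have hftc := intervalIntegral.integral_eq_sub_of_hasDerivAt_of_le hab (hdisc.mul hh)
    (fun t ht => (hasDerivAt_exp_neg_integral_s11 hk ht).mul_of_integratingFactor (hderiv t ht))
    ((hdisc.mul hc).intervalIntegrable_of_Icc hab)
  simpa using hftc

end Discount

theorem initial_value_capitalizes_net_loadings_general
    (n Sbar : ℝ) (hn : 0 < n)
    (δL μL P πL S VL g : ℝ → ℝ)
    (hδ : ContinuousOn δL (Icc 0 n)) (hμ : ContinuousOn μL (Icc 0 n))
    (hP : ContinuousOn P (Icc 0 n)) (hπ : ContinuousOn πL (Icc 0 n))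
    (φL : ℝ → ℝ)
    (hφ : ∀ t, φL t = Real.exp (-(∫ r in (0:ℝ)..t, (δL r + μL r))))
    -- the net premium rate πᴸ : the Thiele solution g with premium πᴸ satisfies
    -- both boundary conditions g(0)=0 and g(n)=S̄
    (hgnet : ∀ t ∈ Icc (0:ℝ) n,
      HasDerivAt g (δL t * g t + πL t - μL t * (S t - g t)) t)
    (hg0 : g 0 = 0) (hgn : g n = Sbar)
    -- Vᴸ : the Thiele solution with the actual contractual premium P and Vᴸ(n)=S̄
    (hVL : ∀ t ∈ Icc (0:ℝ) n,
      HasDerivAt VL (δL t * VL t + P t - μL t * (S t - VL t)) t)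
    (hVLn : VL n = Sbar) :
    VL 0 = -∫ r in (0:ℝ)..n, φL r * (P r - πL r) := by
  have hdiff : ContinuousOn (fun t => VL t - g t) (Icc 0 n) := fun t ht =>
    ((hVL t ht).continuousAt.sub (hgnet t ht).continuousAt).continuousWithinAt
  have hcap := integral_discount_mul_eq_sub hn.le (hδ.add hμ) (hP.sub hπ) hdiff
    fun t ht => hasDerivAt_sub_of_thiele (hVL t (Ioo_subset_Icc_self ht))
      (hgnet t (Ioo_subset_Icc_self ht))
  simp only [Pi.add_apply, Pi.sub_apply, ← hφ] at hcap
  rw [hcap, hVLn, hgn, hg0]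
  ring

/-- The initial policy value capitalizes all future net premium loadings:
`Vᴸ(0) = -∫₀ⁿ φᴸ(r) (P(r) - πᴸ(r)) dr`. -/
theorem initial_value_capitalizes_net_loadings
    (n Sbar : ℝ) (hn : 0 < n)
    (δL μL P πL S VL g : ℝ → ℝ)
    (hδ : ContinuousOn δL (Icc 0 n)) (hμ : ContinuousOn μL (Icc 0 n))
    (hP : ContinuousOn P (Icc 0 n)) (hπ : ContinuousOn πL (Icc 0 n))
    (hS : ContinuousOn S (Icc 0 n))
    (φL : ℝ → ℝ)
    (hφ : ∀ t, φL t = Real.exp (-(∫ r in (0:ℝ)..t, (δL r + μL r))))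
    -- the net premium rate πᴸ : the Thiele solution g with premium πᴸ satisfies
    -- both boundary conditions g(0)=0 and g(n)=S̄
    (hgnet : ∀ t ∈ Icc (0:ℝ) n,
      HasDerivAt g (δL t * g t + πL t - μL t * (S t - g t)) t)
    (hg0 : g 0 = 0) (hgn : g n = Sbar)
    -- Vᴸ : the Thiele solution with the actual contractual premium P and Vᴸ(n)=S̄
    (hVL : ∀ t ∈ Icc (0:ℝ) n,
      HasDerivAt VL (δL t * VL t + P t - μL t * (S t - VL t)) t)
    (hVLn : VL n = Sbar) :
    VL 0 = -∫ r in (0:ℝ)..n, φL r * (P r - πL r) :=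
  initial_value_capitalizes_net_loadings_general n Sbar hn δL μL P πL S VL g hδ hμ hP hπ φL hφ hgnet
    hg0 hgn hVL hVLn
end
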